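/- arXiv:1010.0642 — 3 statements merged into one kernel-verified Lean document; each statement's English description precedes it below -/
import Mathlib

section
/- Single-user error exponent (Corollary 1). Fix a finite rate set {r_1,…,r_M} ⊂ [0,∞), input distributions P_{X|r} on 𝒳, and an operation region 𝓡 ⊆ {r_1,…,r_M} with 𝓡 and its complement nonempty. Then there exists a sequence of decoders (D_N)_{N≥1}, one for each block length N, such that liminf_{N→∞} −(1/N)·log P_es(D_N) ≥ min{ min_{r∈𝓡, r̃∈𝓡} E_m(r̃, P_{X|r}, P_{X|r̃}), min_{r∈𝓡, r̃∈{r_1,…,r_M}∖𝓡} E_i(r, P_{X|r}, P_{X|r̃}) }. -/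
open scoped BigOperators Classical

noncomputable section

/-- `W` is a discrete memoryless channel from `𝓧` to `𝓨`. -/
def IsDMC {𝓧 𝓨 : Type*} [Fintype 𝓨] (W : 𝓧 → 𝓨 → ℝ) : Prop :=
  (∀ x y, 0 ≤ W x y) ∧ ∀ x, ∑ y, W x y = 1

/-- `P` is a probability distribution on `𝓧`. -/
def IsDist {𝓧 : Type*} [Fintype 𝓧] (P : 𝓧 → ℝ) : Prop :=
  (∀ x, 0 ≤ P x) ∧ ∑ x, P x = 1

/-- The `N`-fold memoryless extension `W^N(y|x)`. -/
def Wn {𝓧 𝓨 : Type*} (W : 𝓧 → 𝓨 → ℝ) {N : ℕ} (x : Fin N → 𝓧) (y : Fin N → 𝓨) : ℝ :=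
  ∏ j, W (x j) (y j)

/-- Number of messages of rate class `i`: `⌊e^{N r_i}⌋`. -/
def numMsg {M : ℕ} (N : ℕ) (rate : Fin M → ℝ) (i : Fin M) : ℕ :=
  ⌊Real.exp (N * rate i)⌋₊

/-- A realization of the random access codebook at block length `N`. -/
abbrev Cbk (𝓧 : Type*) {M : ℕ} (N : ℕ) (rate : Fin M → ℝ) : Type _ :=
  (i : Fin M) → Fin (numMsg N rate i) → Fin N → 𝓧

/-- A message–rate pair `(w, r)`. -/
abbrev Msg {M : ℕ} (N : ℕ) (rate : Fin M → ℝ) : Type :=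
  (i : Fin M) × Fin (numMsg N rate i)

/-- The probability of a codebook realization: all codeword symbols are independent,
the symbols of codewords of rate class `i` being distributed as `Pd i`. -/
def cbkProb {𝓧 : Type*} [Fintype 𝓧] {M N : ℕ} (rate : Fin M → ℝ)
    (Pd : Fin M → 𝓧 → ℝ) (c : Cbk 𝓧 N rate) : ℝ :=
  ∏ i, ∏ w, ∏ j, Pd i (c i w j)

/-- The probability of the event `E` of the codebook and the channel output,
when the message–rate pair `p` is transmitted. -/
def prTx {𝓧 𝓨 : Type*} [Fintype 𝓧] [Fintype 𝓨] (W : 𝓧 → 𝓨 → ℝ) {M N : ℕ}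
    (rate : Fin M → ℝ) (Pd : Fin M → 𝓧 → ℝ) (p : Msg N rate)
    (E : Cbk 𝓧 N rate → (Fin N → 𝓨) → Prop) : ℝ :=
  ∑ c : Cbk 𝓧 N rate, ∑ y : Fin N → 𝓨,
    cbkProb rate Pd c * Wn W (c p.1 p.2) y * (if E c y then (1:ℝ) else 0)

/-- The system error probability of the decoder `D`: the maximum, over all transmitted
message–rate pairs, of the decoding error probability (for rates in the operation
region `R`) and of the collision miss detection probability (for rates outside `R`). -/
def Pes {𝓧 𝓨 : Type*} [Fintype 𝓧] [Fintype 𝓨] (W : 𝓧 → 𝓨 → ℝ) {M : ℕ} (N : ℕ)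
    (rate : Fin M → ℝ) (Pd : Fin M → 𝓧 → ℝ) (R : Finset (Fin M))
    (D : Cbk 𝓧 N rate → (Fin N → 𝓨) → Option (Msg N rate)) : ℝ :=
  sSup (Set.range (fun p : Msg N rate =>
    if p.1 ∈ R then prTx W rate Pd p (fun c y => D c y ≠ some p)
    else prTx W rate Pd p (fun c y => D c y ≠ none)))

/-- The exponent `E_m(r̃, P, Q)`. -/
def Em {𝓧 𝓨 : Type*} [Fintype 𝓧] [Fintype 𝓨] (W : 𝓧 → 𝓨 → ℝ)
    (rt : ℝ) (P Q : 𝓧 → ℝ) : ℝ :=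
  sSup ((fun ρ => -ρ * rt +
    sSup ((fun s => -Real.log (∑ y : 𝓨,
        (∑ x : 𝓧, P x * W x y ^ (1 - s)) *
          (∑ x : 𝓧, Q x * W x y ^ (s / ρ)) ^ ρ)) '' Set.Ioc (0:ℝ) 1)) '' Set.Ioc (0:ℝ) 1)

/-- The exponent `E_i(r, P, Q)`. -/
def Ei {𝓧 𝓨 : Type*} [Fintype 𝓧] [Fintype 𝓨] (W : 𝓧 → 𝓨 → ℝ)
    (r : ℝ) (P Q : 𝓧 → ℝ) : ℝ :=
  sSup ((fun ρ =>
    sSup ((fun s => -ρ * r - Real.log (∑ y : 𝓨,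
        (∑ x : 𝓧, P x * W x y ^ (s / (s + ρ))) ^ (s + ρ) *
          (∑ x : 𝓧, Q x * W x y) ^ (1 - s))) '' Set.Ioc (0:ℝ) (1 - ρ))) '' Set.Ioo (0:ℝ) 1)

/-! The decoder keeps the messages of the operation region whose codeword explains the output
`e^{N r}` times better than the output distribution of every rate class outside the region, and
returns the most likely of them, or a collision if there is none. Averaged over the random
codebook, each error event (confusion with another message of the region, failing the threshold
test, some message of the region passing it while a class outside was sent) is bounded by
Gallager's technique: replace the indicator by a power of a likelihood ratio, apply Jensen's or
Hölder's inequality, and use the independence of distinct codewords. This gives `e^{-N a}` for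
every `a` below the claimed exponent; for the miss event the exponent comes from interpolating,
by the log-convexity of Gallager's sum, between the `E_m` exponent of the sent class against
itself and the `E_i` exponent. At most `M` such terms occur, so `P_es ≤ M e^{-N a}`. Finally
`P_es` is not super-exponentially small, since a codeword of a class in the region and one of a
class outside produce the same output with probability `(∑_y (P_i W)(y) (P_k W)(y))^N`, which is
positive unless some `E_i ≤ 0`. -/

open Finset Real Filter

section Inequalities

lemma sum_rpow_mul_rpow_le {ι : Type*} (s : Finset ι) {a b : ι → ℝ} (ha : ∀ i, 0 ≤ a i)
    (hb : ∀ i, 0 ≤ b i) {θ₁ θ₂ : ℝ} (h₁ : 0 ≤ θ₁) (h₂ : 0 ≤ θ₂) (hθ : θ₁ + θ₂ = 1) :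
    ∑ i ∈ s, a i ^ θ₁ * b i ^ θ₂ ≤ (∑ i ∈ s, a i) ^ θ₁ * (∑ i ∈ s, b i) ^ θ₂ := by
  rcases h₂.eq_or_lt with rfl | h₂
  · obtain rfl : θ₁ = 1 := by linarith
    simp
  rcases h₁.eq_or_lt with rfl | h₁
  · obtain rfl : θ₂ = 1 := by linarith
    simp
  have := inner_le_Lp_mul_Lq_of_nonneg s (Real.HolderConjugate.inv_inv h₁ h₂ hθ)
    (fun i _ => rpow_nonneg (ha i) θ₁) (fun i _ => rpow_nonneg (hb i) θ₂)
  simpa [rpow_rpow_inv (ha _) h₁.ne', rpow_rpow_inv (hb _) h₂.ne'] using this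

lemma sum_mul_rpow_le {ι : Type*} (s : Finset ι) {w Z : ι → ℝ} (hw : ∀ i, 0 ≤ w i)
    (hZ : ∀ i, 0 ≤ Z i) {u : ℝ} (hu₀ : 0 < u) (hu₁ : u ≤ 1) :
    ∑ i ∈ s, w i * Z i ^ u ≤ (∑ i ∈ s, w i) ^ (1 - u) * (∑ i ∈ s, w i * Z i) ^ u := by
  have := inner_le_weight_mul_Lp_of_nonneg s ((one_le_inv₀ hu₀).2 hu₁) w (fun i => Z i ^ u) hw
    fun i => rpow_nonneg (hZ i) u
  simpa [rpow_rpow_inv (hZ _) hu₀.ne'] using this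

/-- Gallager's bound on the indicator of a union. -/
lemma one_le_rpow_neg_mul_sum_rpow {κ : Type*} {S : Finset κ} {Z : κ → ℝ} (hZ : ∀ k, 0 ≤ Z k)
    {τ e u : ℝ} (hτ : 0 < τ) (he : 0 < e) (hu : 0 < u) (h : ∃ k ∈ S, τ ≤ Z k) :
    1 ≤ τ ^ (-(e * u)) * (∑ k ∈ S, Z k ^ e) ^ u := by
  obtain ⟨k, hk, hτk⟩ := h
  have hsum : τ ^ e ≤ ∑ k ∈ S, Z k ^ e :=
    (rpow_le_rpow hτ.le hτk he.le).trans (single_le_sum (fun k _ => rpow_nonneg (hZ k) e) hk)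
  calc (1 : ℝ) = τ ^ (-(e * u)) * (τ ^ e) ^ u := by
        rw [← rpow_mul hτ.le, ← rpow_add hτ, neg_add_cancel, rpow_zero]
    _ ≤ τ ^ (-(e * u)) * (∑ k ∈ S, Z k ^ e) ^ u := by gcongr

lemma le_rpow_one_sub_mul_rpow_of_lt {V τ t : ℝ} (hV : 0 ≤ V) (ht : 0 ≤ t) (h : V < τ) :
    V ≤ V ^ (1 - t) * τ ^ t :=
  calc V = V ^ (1 - t) * V ^ t := by rw [← rpow_add' hV (by simp), sub_add_cancel, rpow_one]
    _ ≤ V ^ (1 - t) * τ ^ t := by gcongr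

lemma le_rpow_one_sub_mul_sum_rpow {κ : Type*} {S : Finset κ} {Z : κ → ℝ} (hZ : ∀ k, 0 ≤ Z k)
    {V ρ s : ℝ} (hV : 0 ≤ V) (hρ : 0 < ρ) (hs : 0 < s) (h : ∃ k ∈ S, V ≤ Z k) :
    V ≤ V ^ (1 - s) * (∑ k ∈ S, Z k ^ (s / ρ)) ^ ρ := by
  have hsum : 0 ≤ ∑ k ∈ S, Z k ^ (s / ρ) := sum_nonneg fun k _ => rpow_nonneg (hZ k) _
  rcases hV.eq_or_lt with rfl | hV
  · exact mul_nonneg (rpow_nonneg le_rfl _) (rpow_nonneg hsum _)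
  have hone := one_le_rpow_neg_mul_sum_rpow hZ hV (div_pos hs hρ) hρ h
  rw [div_mul_cancel₀ s hρ.ne'] at hone
  calc V = V ^ (1 - s) * V ^ s * 1 := by rw [← rpow_add hV, sub_add_cancel, rpow_one, mul_one]
    _ ≤ V ^ (1 - s) * V ^ s * (V ^ (-s) * (∑ k ∈ S, Z k ^ (s / ρ)) ^ ρ) := by gcongr
    _ = V ^ (1 - s) * (∑ k ∈ S, Z k ^ (s / ρ)) ^ ρ := by
        rw [mul_assoc, ← mul_assoc (V ^ s), ← rpow_add hV, add_neg_cancel, rpow_zero, one_mul]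

lemma rpow_rpow_mul_rpow_rpow {w e₁ e₂ θ₁ θ₂ : ℝ} (hw : 0 ≤ w) (he₁ : 0 ≤ e₁) (he₂ : 0 ≤ e₂)
    (hθ₁ : 0 ≤ θ₁) (hθ₂ : 0 ≤ θ₂) :
    (w ^ e₁) ^ θ₁ * (w ^ e₂) ^ θ₂ = w ^ (e₁ * θ₁ + e₂ * θ₂) := by
  rw [← rpow_mul hw, ← rpow_mul hw, rpow_add_of_nonneg hw (by positivity) (by positivity)]

lemma mul_rpow_mul_mul_rpow {P w e₁ e₂ θ₁ θ₂ : ℝ} (hP : 0 ≤ P) (hw : 0 ≤ w) (he₁ : 0 ≤ e₁)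
    (he₂ : 0 ≤ e₂) (hθ₁ : 0 ≤ θ₁) (hθ₂ : 0 ≤ θ₂) (hθ : θ₁ + θ₂ = 1) :
    (P * w ^ e₁) ^ θ₁ * (P * w ^ e₂) ^ θ₂ = P * w ^ (e₁ * θ₁ + e₂ * θ₂) := by
  rw [mul_rpow hP (rpow_nonneg hw _), mul_rpow hP (rpow_nonneg hw _),
    ← rpow_rpow_mul_rpow_rpow hw he₁ he₂ hθ₁ hθ₂]
  calc P ^ θ₁ * (w ^ e₁) ^ θ₁ * (P ^ θ₂ * (w ^ e₂) ^ θ₂)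
      = P ^ (θ₁ + θ₂) * ((w ^ e₁) ^ θ₁ * (w ^ e₂) ^ θ₂) := by
        rw [rpow_add_of_nonneg hP hθ₁ hθ₂]; ring
    _ = P * ((w ^ e₁) ^ θ₁ * (w ^ e₂) ^ θ₂) := by rw [hθ, rpow_one]

lemma mul_le_mul_ite_add_mul_ite {E₁ E₂ : Prop} (h : E₁ ∨ E₂) {w₁ w₂ : ℝ} (h₁ : 0 ≤ w₁)
    (h₂ : 0 ≤ w₂) (h₁' : w₁ ≤ 1) (h₂' : w₂ ≤ 1) :
    w₁ * w₂ ≤ w₁ * (if E₁ then 1 else 0) + w₂ * (if E₂ then 1 else 0) := by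
  rcases h with h | h
  · rw [if_pos h, mul_one]
    nlinarith [mul_nonneg h₂ (show (0 : ℝ) ≤ if E₂ then 1 else 0 by split_ifs <;> norm_num)]
  · rw [if_pos h, mul_one]
    nlinarith [mul_nonneg h₁ (show (0 : ℝ) ≤ if E₁ then 1 else 0 by split_ifs <;> norm_num)]

lemma lt_exp_neg_of_lt_neg_log {X b : ℝ} (hX : 0 ≤ X) (h : b < -log X) : X < exp (-b) := by
  rcases hX.eq_or_lt with rfl | hX
  · exact exp_pos _
  calc X = exp (log X) := (exp_log hX).symm
    _ < exp (-b) := exp_lt_exp.2 (by linarith)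

lemma mul_pow_le_exp_neg {C X x a : ℝ} {N : ℕ} (hC : C ≤ exp (N * x)) (hX₀ : 0 ≤ X)
    (hX : X ≤ exp (-(a + x))) : C * X ^ N ≤ exp (-(N * a)) :=
  calc C * X ^ N ≤ exp (N * x) * exp (-(a + x)) ^ N := by gcongr
    _ = exp (-(N * a)) := by rw [← exp_nat_mul, ← exp_add]; ring_nf

lemma liminf_nonneg_of_nonneg {α : Type*} {l : Filter α} {u : α → ℝ} (hu : ∀ n, 0 ≤ u n) :
    0 ≤ liminf u l := by
  rw [liminf_eq]
  by_cases hb : BddAbove {a | ∀ᶠ n in l, a ≤ u n}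
  · exact le_csSup hb (Eventually.of_forall hu)
  · rw [Real.sSup_of_not_bddAbove hb]

/-- The lower bound keeps the rates bounded above; without it `liminf` in `ℝ` could be junk. -/
lemma le_liminf_neg_log_of_bounds {P : ℕ → ℝ} {C b K T : ℝ} (hC : 0 < C) (hb : 0 < b)
    (hlow : ∀ N, C * b ^ N ≤ P N) (hK : 0 < K) (hup : ∀ a < T, ∀ N, P N ≤ K * exp (-(N * a))) :
    T ≤ liminf (fun N : ℕ => -(1 / (N : ℝ)) * log (P N)) atTop := by
  have hP : ∀ N, 0 < P N := fun N => (mul_pos hC (pow_pos hb N)).trans_le (hlow N)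
  have hbdd : IsCoboundedUnder (· ≥ ·) atTop (fun N : ℕ => -(1 / (N : ℝ)) * log (P N)) := by
    refine isCoboundedUnder_ge_of_eventually_le atTop (x := |log C| - log b) ?_
    filter_upwards [eventually_ge_atTop 1] with N hN
    have hN : (1 : ℝ) ≤ N := by exact_mod_cast hN
    have hlog : log C + N * log b ≤ log (P N) := by
      rw [← log_pow, ← log_mul hC.ne' (pow_pos hb N).ne']
      exact log_le_log (by positivity) (hlow N)
    calc -(1 / (N : ℝ)) * log (P N) ≤ -(1 / (N : ℝ)) * (log C + N * log b) :=
          mul_le_mul_of_nonpos_left hlog (neg_nonpos.2 (by positivity))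
      _ = -log C / N - log b := by field_simp; ring
      _ ≤ |log C| - log b := by
          gcongr
          exact (div_le_div_of_nonneg_right (neg_le_abs _) (by positivity)).trans
            (div_le_self (abs_nonneg _) hN)
  refine le_of_forall_lt_imp_le_of_dense fun c hc => le_liminf_of_le hbdd ?_
  set a := (c + T) / 2
  have hlim := (tendsto_const_div_atTop_nhds_zero_nat (log K)).eventually
    (gt_mem_nhds (show (0 : ℝ) < a - c by simp only [a]; linarith))
  filter_upwards [hlim, eventually_ge_atTop 1] with N hN hN1
  have hN : (0 : ℝ) < N := by exact_mod_cast hN1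
  have hlog : log (P N) ≤ log K - N * a := by
    have := log_le_log (hP N) (hup a (by simp only [a]; linarith) N)
    rwa [log_mul hK.ne' (exp_pos _).ne', log_exp, ← sub_eq_add_neg] at this
  calc c ≤ a - log K / N := by linarith
    _ = -(1 / (N : ℝ)) * (log K - N * a) := by field_simp; ring
    _ ≤ -(1 / (N : ℝ)) * log (P N) := mul_le_mul_of_nonpos_left hlog (neg_nonpos.2 (by positivity))

end Inequalities

section Codebook

variable {𝓧 𝓨 : Type*}

def iidProb (P : 𝓧 → ℝ) {N : ℕ} (z : Fin N → 𝓧) : ℝ := ∏ j, P (z j)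

def outDist [Fintype 𝓧] (W : 𝓧 → 𝓨 → ℝ) (Q : 𝓧 → ℝ) (y : 𝓨) : ℝ := ∑ x, Q x * W x y

lemma IsDMC.le_one [Fintype 𝓨] {W : 𝓧 → 𝓨 → ℝ} (hW : IsDMC W) (x : 𝓧) (y : 𝓨) :
    W x y ≤ 1 :=
  hW.2 x ▸ single_le_sum (fun y' _ => hW.1 x y') (mem_univ y)

lemma Wn_nonneg [Fintype 𝓨] {W : 𝓧 → 𝓨 → ℝ} (hW : IsDMC W) {N : ℕ} (z : Fin N → 𝓧)
    (y : Fin N → 𝓨) : 0 ≤ Wn W z y :=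
  prod_nonneg fun _ _ => hW.1 _ _

lemma Wn_le_one [Fintype 𝓨] {W : 𝓧 → 𝓨 → ℝ} (hW : IsDMC W) {N : ℕ} (z : Fin N → 𝓧)
    (y : Fin N → 𝓨) : Wn W z y ≤ 1 :=
  prod_le_one (fun _ _ => hW.1 _ _) fun _ _ => hW.le_one _ _

lemma sum_Wn [Fintype 𝓨] {W : 𝓧 → 𝓨 → ℝ} (hW : IsDMC W) {N : ℕ} (z : Fin N → 𝓧) :
    ∑ y, Wn W z y = 1 := by
  simp [Wn, ← Fintype.prod_sum, hW.2]

lemma iidProb_nonneg {P : 𝓧 → ℝ} (hP : ∀ x, 0 ≤ P x) {N : ℕ} (z : Fin N → 𝓧) :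
    0 ≤ iidProb P z :=
  prod_nonneg fun _ _ => hP _

lemma sum_iidProb [Fintype 𝓧] {P : 𝓧 → ℝ} (hP : IsDist P) (N : ℕ) :
    ∑ z : Fin N → 𝓧, iidProb P z = 1 := by
  simp [iidProb, ← Fintype.prod_sum, hP.2]

lemma outDist_nonneg [Fintype 𝓧] [Fintype 𝓨] {W : 𝓧 → 𝓨 → ℝ} (hW : IsDMC W) {Q : 𝓧 → ℝ}
    (hQ : ∀ x, 0 ≤ Q x) (y : 𝓨) : 0 ≤ outDist W Q y :=
  sum_nonneg fun x _ => mul_nonneg (hQ x) (hW.1 x y)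

lemma sum_iidProb_mul_Wn_rpow [Fintype 𝓧] [Fintype 𝓨] {W : 𝓧 → 𝓨 → ℝ} (hW : IsDMC W)
    (P : 𝓧 → ℝ) {N : ℕ} (y : Fin N → 𝓨) (e : ℝ) :
    ∑ z, iidProb P z * Wn W z y ^ e = ∏ j, ∑ x, P x * W x (y j) ^ e := by
  rw [Fintype.prod_sum]
  refine sum_congr rfl fun z _ => ?_
  rw [iidProb, Wn, ← finsetProd_rpow _ _ (fun j _ => hW.1 _ _), ← prod_mul_distrib]

lemma sum_iidProb_mul_Wn [Fintype 𝓧] [Fintype 𝓨] {W : 𝓧 → 𝓨 → ℝ} (hW : IsDMC W)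
    (P : 𝓧 → ℝ) {N : ℕ} (y : Fin N → 𝓨) :
    ∑ z, iidProb P z * Wn W z y = iidProb (outDist W P) y := by
  simpa [iidProb, outDist] using sum_iidProb_mul_Wn_rpow hW P y 1

variable [Fintype 𝓧] {M N : ℕ} {rate : Fin M → ℝ} {Pd : Fin M → 𝓧 → ℝ}

lemma cbkProb_nonneg (hPd : ∀ i, IsDist (Pd i)) (c : Cbk 𝓧 N rate) : 0 ≤ cbkProb rate Pd c :=
  prod_nonneg fun i _ => prod_nonneg fun _ _ => iidProb_nonneg (hPd i).1 _

lemma sum_cbkProb_mul_prod (rate : Fin M → ℝ) (Pd : Fin M → 𝓧 → ℝ)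
    (F : Msg N rate → (Fin N → 𝓧) → ℝ) :
    ∑ c : Cbk 𝓧 N rate, cbkProb rate Pd c * ∏ q, F q (c q.1 q.2)
      = ∏ q : Msg N rate, ∑ z, iidProb (Pd q.1) z * F q z := by
  calc ∑ c : Cbk 𝓧 N rate, cbkProb rate Pd c * ∏ q, F q (c q.1 q.2)
      = ∑ c : Cbk 𝓧 N rate, ∏ i, ∏ w, iidProb (Pd i) (c i w) * F ⟨i, w⟩ (c i w) := by
        simp only [cbkProb, iidProb, Fintype.prod_sigma, ← prod_mul_distrib]
    _ = ∏ i, ∑ row : Fin (numMsg N rate i) → Fin N → 𝓧,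
          ∏ w, iidProb (Pd i) (row w) * F ⟨i, w⟩ (row w) :=
        (Fintype.prod_sum fun i (row : Fin (numMsg N rate i) → Fin N → 𝓧) =>
          ∏ w, iidProb (Pd i) (row w) * F ⟨i, w⟩ (row w)).symm
    _ = ∏ i, ∏ w, ∑ z, iidProb (Pd i) z * F ⟨i, w⟩ z :=
        prod_congr rfl fun i _ =>
          (Fintype.prod_sum fun w z => iidProb (Pd i) z * F ⟨i, w⟩ z).symm
    _ = ∏ q : Msg N rate, ∑ z, iidProb (Pd q.1) z * F q z := by
        rw [Fintype.prod_sigma]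

lemma sum_cbkProb_mul_prod_mem (hPd : ∀ i, IsDist (Pd i)) (S : Finset (Msg N rate))
    (F : Msg N rate → (Fin N → 𝓧) → ℝ) :
    ∑ c : Cbk 𝓧 N rate, cbkProb rate Pd c * ∏ q ∈ S, F q (c q.1 q.2)
      = ∏ q ∈ S, ∑ z, iidProb (Pd q.1) z * F q z := by
  simpa [← Fintype.prod_ite_mem, apply_ite, mul_ite, sum_ite_irrel, sum_iidProb (hPd _)] using
    sum_cbkProb_mul_prod rate Pd fun q z => if q ∈ S then F q z else 1

lemma sum_cbkProb (hPd : ∀ i, IsDist (Pd i)) : ∑ c : Cbk 𝓧 N rate, cbkProb rate Pd c = 1 := by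
  simpa using sum_cbkProb_mul_prod_mem hPd ∅ fun _ _ => 1

lemma sum_cbkProb_mul_apply (hPd : ∀ i, IsDist (Pd i)) (p : Msg N rate)
    (f : (Fin N → 𝓧) → ℝ) :
    ∑ c : Cbk 𝓧 N rate, cbkProb rate Pd c * f (c p.1 p.2) = ∑ z, iidProb (Pd p.1) z * f z := by
  simpa using sum_cbkProb_mul_prod_mem hPd {p} fun _ => f

lemma sum_cbkProb_mul_mul_apply (hPd : ∀ i, IsDist (Pd i)) {p q : Msg N rate} (hpq : p ≠ q)
    (f g : (Fin N → 𝓧) → ℝ) :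
    ∑ c : Cbk 𝓧 N rate, cbkProb rate Pd c * (f (c p.1 p.2) * g (c q.1 q.2))
      = (∑ z, iidProb (Pd p.1) z * f z) * ∑ z, iidProb (Pd q.1) z * g z := by
  simpa [prod_pair hpq, hpq.symm] using
    sum_cbkProb_mul_prod_mem hPd {p, q} fun r => if r = p then f else g

lemma sum_cbkProb_mul_ite_le {W : 𝓧 → 𝓨 → ℝ} (hPd : ∀ i, IsDist (Pd i)) (p : Msg N rate)
    (y : Fin N → 𝓨) {E : Cbk 𝓧 N rate → Prop} {F : Cbk 𝓧 N rate → ℝ} (hF₀ : ∀ c, 0 ≤ F c)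
    (hF : ∀ c, E c → Wn W (c p.1 p.2) y ≤ F c) :
    ∑ c, cbkProb rate Pd c * Wn W (c p.1 p.2) y * (if E c then 1 else 0)
      ≤ ∑ c, cbkProb rate Pd c * F c := by
  refine sum_le_sum fun c _ => ?_
  have := cbkProb_nonneg hPd c
  split_ifs with hE
  · rw [mul_one]; gcongr; exact hF c hE
  · rw [mul_zero]; exact mul_nonneg this (hF₀ c)

/-- Jensen's inequality for the concave `t ↦ t ^ u`, combined with the independence of distinct
codewords. -/
lemma sum_cbkProb_mul_rpow_sum_le (hPd : ∀ i, IsDist (Pd i)) {p : Msg N rate} {k : Fin M}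
    {S : Finset (Msg N rate)} (hS : ∀ q ∈ S, q.1 = k) (hpS : p ∉ S) {f g : (Fin N → 𝓧) → ℝ}
    (hf : ∀ z, 0 ≤ f z) (hg : ∀ z, 0 ≤ g z) {u : ℝ} (hu₀ : 0 < u) (hu₁ : u ≤ 1) :
    ∑ c : Cbk 𝓧 N rate, cbkProb rate Pd c * (f (c p.1 p.2) * (∑ q ∈ S, g (c q.1 q.2)) ^ u)
      ≤ (#S : ℝ) ^ u *
        ((∑ z, iidProb (Pd p.1) z * f z) * (∑ z, iidProb (Pd k) z * g z) ^ u) := by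
  set A := ∑ z, iidProb (Pd p.1) z * f z
  set B := ∑ z, iidProb (Pd k) z * g z
  have hA : 0 ≤ A := sum_nonneg fun z _ => mul_nonneg (iidProb_nonneg (hPd _).1 z) (hf z)
  have hB : 0 ≤ B := sum_nonneg fun z _ => mul_nonneg (iidProb_nonneg (hPd _).1 z) (hg z)
  have hcross : ∑ c : Cbk 𝓧 N rate,
      cbkProb rate Pd c * f (c p.1 p.2) * ∑ q ∈ S, g (c q.1 q.2) = #S * (A * B) := by
    simp_rw [mul_sum]
    rw [sum_comm, ← nsmul_eq_mul, ← sum_const]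
    refine sum_congr rfl fun q hq => ?_
    simp only [mul_assoc, sum_cbkProb_mul_mul_apply hPd (ne_of_mem_of_not_mem hq hpS).symm f g,
      hS q hq, A, B]
  calc ∑ c : Cbk 𝓧 N rate, cbkProb rate Pd c * (f (c p.1 p.2) * (∑ q ∈ S, g (c q.1 q.2)) ^ u)
      = ∑ c : Cbk 𝓧 N rate, cbkProb rate Pd c * f (c p.1 p.2) * (∑ q ∈ S, g (c q.1 q.2)) ^ u :=
        by simp only [mul_assoc]
    _ ≤ (∑ c : Cbk 𝓧 N rate, cbkProb rate Pd c * f (c p.1 p.2)) ^ (1 - u) *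
          (∑ c : Cbk 𝓧 N rate, cbkProb rate Pd c * f (c p.1 p.2) * ∑ q ∈ S, g (c q.1 q.2)) ^ u :=
        sum_mul_rpow_le _ (fun c => mul_nonneg (cbkProb_nonneg hPd c) (hf _))
          (fun c => sum_nonneg fun q _ => hg _) hu₀ hu₁
    _ = A ^ (1 - u) * (#S * (A * B)) ^ u := by rw [sum_cbkProb_mul_apply hPd p f, hcross]
    _ = (#S : ℝ) ^ u * ((A ^ (1 - u) * A ^ u) * B ^ u) := by
        rw [mul_rpow (by positivity) (mul_nonneg hA hB), mul_rpow hA hB]; ring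
    _ = (#S : ℝ) ^ u * (A * B ^ u) := by rw [← rpow_add' hA (by simp), sub_add_cancel, rpow_one]

end Codebook

section Transmission

variable {𝓧 𝓨 : Type*} [Fintype 𝓧] [Fintype 𝓨] {W : 𝓧 → 𝓨 → ℝ} {M N : ℕ}
  {rate : Fin M → ℝ} {Pd : Fin M → 𝓧 → ℝ}

lemma prTx_nonneg (hW : IsDMC W) (hPd : ∀ i, IsDist (Pd i)) (p : Msg N rate)
    (E : Cbk 𝓧 N rate → (Fin N → 𝓨) → Prop) : 0 ≤ prTx W rate Pd p E :=
  sum_nonneg fun c _ => sum_nonneg fun y _ => by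
    have := cbkProb_nonneg hPd c; have := Wn_nonneg hW (c p.1 p.2) y; positivity

lemma prTx_mono (hW : IsDMC W) (hPd : ∀ i, IsDist (Pd i)) (p : Msg N rate)
    {E E' : Cbk 𝓧 N rate → (Fin N → 𝓨) → Prop} (h : ∀ c y, E c y → E' c y) :
    prTx W rate Pd p E ≤ prTx W rate Pd p E' := by
  refine sum_le_sum fun c _ => sum_le_sum fun y _ => ?_
  have := cbkProb_nonneg hPd c; have := Wn_nonneg hW (c p.1 p.2) y
  gcongr
  split_ifs with hE hE'
  · exact le_rfl
  · exact absurd (h c y hE) hE'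
  · exact zero_le_one
  · exact le_rfl

lemma prTx_le_one (hW : IsDMC W) (hPd : ∀ i, IsDist (Pd i)) (p : Msg N rate)
    (E : Cbk 𝓧 N rate → (Fin N → 𝓨) → Prop) : prTx W rate Pd p E ≤ 1 := by
  refine (prTx_mono hW hPd p fun _ _ _ => trivial).trans_eq ?_
  simp [prTx, ← mul_sum, sum_Wn hW, sum_cbkProb hPd]

lemma prTx_le_sum (hW : IsDMC W) (hPd : ∀ i, IsDist (Pd i)) (p : Msg N rate)
    {κ : Type*} (K : Finset κ) {E : Cbk 𝓧 N rate → (Fin N → 𝓨) → Prop}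
    (Ek : κ → Cbk 𝓧 N rate → (Fin N → 𝓨) → Prop) (h : ∀ c y, E c y → ∃ k ∈ K, Ek k c y) :
    prTx W rate Pd p E ≤ ∑ k ∈ K, prTx W rate Pd p (Ek k) := by
  calc prTx W rate Pd p E
      ≤ ∑ c, ∑ y, ∑ k ∈ K, cbkProb rate Pd c * Wn W (c p.1 p.2) y *
          (if Ek k c y then 1 else 0) := by
        refine sum_le_sum fun c _ => sum_le_sum fun y _ => ?_
        rw [← mul_sum]
        have := cbkProb_nonneg hPd c; have := Wn_nonneg hW (c p.1 p.2) y
        gcongr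
        split_ifs with hE
        · obtain ⟨k, hk, hEk⟩ := h c y hE
          exact (if_pos hEk).symm.le.trans
            (single_le_sum (f := fun k => if Ek k c y then (1 : ℝ) else 0)
              (fun k _ => by positivity) hk)
        · exact sum_nonneg fun k _ => by positivity
    _ = ∑ k ∈ K, prTx W rate Pd p (Ek k) :=
        (sum_comm.trans (sum_congr rfl fun c _ => sum_comm)).symm

lemma prTx_le_sum_of_le (p : Msg N rate)
    {E : Cbk 𝓧 N rate → (Fin N → 𝓨) → Prop} {B : (Fin N → 𝓨) → ℝ}
    (hB : ∀ y, ∑ c, cbkProb rate Pd c * Wn W (c p.1 p.2) y * (if E c y then 1 else 0) ≤ B y) :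
    prTx W rate Pd p E ≤ ∑ y, B y := by
  rw [prTx, sum_comm]
  exact sum_le_sum fun y _ => hB y

end Transmission

section GallagerSums

variable {𝓧 𝓨 : Type*} [Fintype 𝓧] [Fintype 𝓨]

/-- The sum whose negative logarithm appears in `Em`. -/
def emSum (W : 𝓧 → 𝓨 → ℝ) (P Q : 𝓧 → ℝ) (ρ s : ℝ) : ℝ :=
  ∑ y, (∑ x, P x * W x y ^ (1 - s)) * (∑ x, Q x * W x y ^ (s / ρ)) ^ ρ

/-- Gallager's sum: `Ei` uses it at `v = s + ρ`, the miss-detection bound at `v = 1`. -/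
def gallagerSum (W : 𝓧 → 𝓨 → ℝ) (P Q : 𝓧 → ℝ) (s v : ℝ) : ℝ :=
  ∑ y, (∑ x, P x * W x y ^ (s / v)) ^ v * outDist W Q y ^ (1 - s)

end GallagerSums

section ErrorBounds

variable {𝓧 𝓨 : Type*} [Fintype 𝓧] [Fintype 𝓨] {W : 𝓧 → 𝓨 → ℝ} {M N : ℕ}
  {rate : Fin M → ℝ} {Pd : Fin M → 𝓧 → ℝ}

lemma prTx_confusion_le (hW : IsDMC W) (hPd : ∀ i, IsDist (Pd i)) (p : Msg N rate) {k : Fin M}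
    {S : Finset (Msg N rate)} (hS : ∀ q ∈ S, q.1 = k) (hpS : p ∉ S) {ρ s : ℝ} (hρ₀ : 0 < ρ)
    (hρ₁ : ρ ≤ 1) (hs : 0 < s) :
    prTx W rate Pd p (fun c y => ∃ q ∈ S, Wn W (c p.1 p.2) y ≤ Wn W (c q.1 q.2) y)
      ≤ (#S : ℝ) ^ ρ * emSum W (Pd p.1) (Pd k) ρ s ^ N := by
  refine (prTx_le_sum_of_le p fun y => (sum_cbkProb_mul_ite_le hPd p y (fun c => ?_)
    fun c hc => le_rpow_one_sub_mul_sum_rpow (fun q => Wn_nonneg hW _ y) (Wn_nonneg hW _ _)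
      hρ₀ hs hc).trans <| sum_cbkProb_mul_rpow_sum_le hPd hS hpS
        (fun z => rpow_nonneg (Wn_nonneg hW z y) _) (fun z => rpow_nonneg (Wn_nonneg hW z y) _)
        hρ₀ hρ₁).trans_eq ?_
  · exact mul_nonneg (rpow_nonneg (Wn_nonneg hW _ _) _)
      (rpow_nonneg (sum_nonneg fun q _ => rpow_nonneg (Wn_nonneg hW _ _) _) _)
  · rw [← mul_sum, emSum, Fintype.sum_pow]
    congr 1
    refine sum_congr rfl fun y _ => ?_
    rw [sum_iidProb_mul_Wn_rpow hW, sum_iidProb_mul_Wn_rpow hW, ← finsetProd_rpow _ _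
      (fun j _ => sum_nonneg fun x _ => mul_nonneg ((hPd k).1 x) (rpow_nonneg (hW.1 x _) _)),
      ← prod_mul_distrib]

lemma prTx_miss_le (hW : IsDMC W) (hPd : ∀ i, IsDist (Pd i)) (p : Msg N rate) (k : Fin M)
    (γ : ℝ) {t : ℝ} (ht : 0 ≤ t) :
    prTx W rate Pd p
        (fun c y => Wn W (c p.1 p.2) y < exp γ * iidProb (outDist W (Pd k)) y)
      ≤ exp (γ * t) * gallagerSum W (Pd p.1) (Pd k) (1 - t) 1 ^ N := by
  have hQ : ∀ y, 0 ≤ outDist W (Pd k) y := outDist_nonneg hW (hPd k).1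
  refine (prTx_le_sum_of_le p fun y => sum_cbkProb_mul_ite_le hPd p y
    (fun c => mul_nonneg (rpow_nonneg (Wn_nonneg hW _ _) _)
      (rpow_nonneg (mul_nonneg (exp_pos γ).le (iidProb_nonneg hQ y)) _))
    fun c hc => le_rpow_one_sub_mul_rpow_of_lt (Wn_nonneg hW _ _) ht hc).trans_eq ?_
  rw [gallagerSum, Fintype.sum_pow, mul_sum]
  refine sum_congr rfl fun y _ => ?_
  simp only [← mul_assoc, ← sum_mul]
  rw [sum_cbkProb_mul_apply hPd p fun z => Wn W z y ^ (1 - t), sum_iidProb_mul_Wn_rpow hW,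
    mul_rpow (exp_pos γ).le (iidProb_nonneg hQ y), ← exp_mul, iidProb,
    ← finsetProd_rpow _ _ fun j _ => hQ _]
  simp only [div_one, rpow_one, sub_sub_cancel, prod_mul_distrib]
  ring

lemma sum_cbkProb_falseAlarm_le_of_pos (hW : IsDMC W) (hPd : ∀ i, IsDist (Pd i))
    (p : Msg N rate) {i : Fin M} {S : Finset (Msg N rate)} (hS : ∀ q ∈ S, q.1 = i) (hpS : p ∉ S)
    {γ : ℝ} (hcard : (#S : ℝ) ≤ exp γ) {ρ s : ℝ} (hρ : 0 < ρ) (hs : 0 < s) (hsρ : s + ρ ≤ 1)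
    (y : Fin N → 𝓨) (hσ : 0 < iidProb (outDist W (Pd p.1)) y) {E : Cbk 𝓧 N rate → Prop}
    (hE : ∀ c, E c → ∃ q ∈ S, exp γ * iidProb (outDist W (Pd p.1)) y ≤ Wn W (c q.1 q.2) y) :
    ∑ c, cbkProb rate Pd c * Wn W (c p.1 p.2) y * (if E c then 1 else 0)
      ≤ exp (ρ * γ) * (iidProb (outDist W (Pd p.1)) y ^ (1 - s) *
          (∑ z, iidProb (Pd i) z * Wn W z y ^ (s / (s + ρ))) ^ (s + ρ)) := by
  set σ := iidProb (outDist W (Pd p.1)) y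
  set K := ∑ z, iidProb (Pd i) z * Wn W z y ^ (s / (s + ρ))
  have hu : 0 < s + ρ := by linarith
  have hτ : 0 < exp γ * σ := mul_pos (exp_pos γ) hσ
  calc _ ≤ ∑ c, cbkProb rate Pd c * (Wn W (c p.1 p.2) y * ((exp γ * σ) ^ (-(s / (s + ρ) * (s + ρ)))
          * (∑ q ∈ S, Wn W (c q.1 q.2) y ^ (s / (s + ρ))) ^ (s + ρ))) :=
        sum_cbkProb_mul_ite_le hPd p y (fun c => mul_nonneg (Wn_nonneg hW _ _) (mul_nonneg
          (rpow_nonneg hτ.le _) (rpow_nonneg (sum_nonneg fun q _ => rpow_nonneg (Wn_nonneg hW _ _)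
            _) _))) fun c hc => le_mul_of_one_le_right (Wn_nonneg hW _ _)
              (one_le_rpow_neg_mul_sum_rpow (fun q => Wn_nonneg hW _ y) hτ (div_pos hs hu) hu
                (hE c hc))
    _ = (exp γ * σ) ^ (-s) * ∑ c, cbkProb rate Pd c *
          (Wn W (c p.1 p.2) y * (∑ q ∈ S, Wn W (c q.1 q.2) y ^ (s / (s + ρ))) ^ (s + ρ)) := by
        rw [div_mul_cancel₀ _ hu.ne', mul_sum]
        exact sum_congr rfl fun c _ => by ring
    _ ≤ (exp γ * σ) ^ (-s) * ((#S : ℝ) ^ (s + ρ) * (σ * K ^ (s + ρ))) := by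
        gcongr
        simpa only [sum_iidProb_mul_Wn hW] using sum_cbkProb_mul_rpow_sum_le hPd hS hpS
          (fun z => Wn_nonneg hW z y) (fun z => rpow_nonneg (Wn_nonneg hW z y) _) hu hsρ
    _ ≤ (exp γ * σ) ^ (-s) * (exp γ ^ (s + ρ) * (σ * K ^ (s + ρ))) := by
        have : 0 ≤ K := sum_nonneg fun z _ =>
          mul_nonneg (iidProb_nonneg (hPd i).1 z) (rpow_nonneg (Wn_nonneg hW z y) _)
        gcongr
    _ = exp (ρ * γ) * (σ ^ (1 - s) * K ^ (s + ρ)) := by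
        rw [mul_rpow (exp_pos γ).le hσ.le, ← exp_mul, ← exp_mul, sub_eq_neg_add,
          rpow_add_one hσ.ne']
        calc exp (γ * -s) * σ ^ (-s) * (exp (γ * (s + ρ)) * (σ * K ^ (s + ρ)))
            = exp (γ * -s + γ * (s + ρ)) * (σ ^ (-s) * σ * K ^ (s + ρ)) := by
              rw [exp_add]; ring
          _ = exp (ρ * γ) * (σ ^ (-s) * σ * K ^ (s + ρ)) := by ring_nf

lemma sum_cbkProb_falseAlarm_le (hW : IsDMC W) (hPd : ∀ i, IsDist (Pd i)) (p : Msg N rate)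
    {i : Fin M} {S : Finset (Msg N rate)} (hS : ∀ q ∈ S, q.1 = i) (hpS : p ∉ S) {γ : ℝ}
    (hcard : (#S : ℝ) ≤ exp γ) {ρ s : ℝ} (hρ : 0 < ρ) (hs : 0 < s) (hsρ : s + ρ ≤ 1)
    (y : Fin N → 𝓨) {E : Cbk 𝓧 N rate → Prop}
    (hE : ∀ c, E c → ∃ q ∈ S, exp γ * iidProb (outDist W (Pd p.1)) y ≤ Wn W (c q.1 q.2) y) :
    ∑ c, cbkProb rate Pd c * Wn W (c p.1 p.2) y * (if E c then 1 else 0)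
      ≤ exp (ρ * γ) * (iidProb (outDist W (Pd p.1)) y ^ (1 - s) *
          (∑ z, iidProb (Pd i) z * Wn W z y ^ (s / (s + ρ))) ^ (s + ρ)) := by
  rcases (iidProb_nonneg (outDist_nonneg hW (hPd p.1).1) y).eq_or_lt with hσ | hσ
  · calc _ ≤ ∑ c, cbkProb rate Pd c * Wn W (c p.1 p.2) y :=
          sum_cbkProb_mul_ite_le hPd p y (fun c => Wn_nonneg hW _ _) fun c _ => le_rfl
      _ = 0 := by rw [sum_cbkProb_mul_apply hPd p fun z => Wn W z y, sum_iidProb_mul_Wn hW, ← hσ]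
      _ ≤ _ := mul_nonneg (exp_pos _).le (mul_nonneg (rpow_nonneg hσ.le _) (rpow_nonneg
          (sum_nonneg fun z _ => mul_nonneg (iidProb_nonneg (hPd i).1 z)
            (rpow_nonneg (Wn_nonneg hW z y) _)) _))
  · exact sum_cbkProb_falseAlarm_le_of_pos hW hPd p hS hpS hcard hρ hs hsρ y hσ hE

lemma prTx_falseAlarm_le (hW : IsDMC W) (hPd : ∀ i, IsDist (Pd i)) (p : Msg N rate)
    {i : Fin M} {S : Finset (Msg N rate)} (hS : ∀ q ∈ S, q.1 = i) (hpS : p ∉ S) {γ : ℝ}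
    (hcard : (#S : ℝ) ≤ exp γ) {ρ s : ℝ} (hρ : 0 < ρ) (hs : 0 < s) (hsρ : s + ρ ≤ 1) :
    prTx W rate Pd p
        (fun c y => ∃ q ∈ S, exp γ * iidProb (outDist W (Pd p.1)) y ≤ Wn W (c q.1 q.2) y)
      ≤ exp (ρ * γ) * gallagerSum W (Pd i) (Pd p.1) s (s + ρ) ^ N := by
  refine (prTx_le_sum_of_le p fun y =>
    sum_cbkProb_falseAlarm_le hW hPd p hS hpS hcard hρ hs hsρ y fun _ h => h).trans_eq ?_
  rw [← mul_sum, gallagerSum, Fintype.sum_pow]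
  congr 1
  refine sum_congr rfl fun y _ => ?_
  have hPW : ∀ j, 0 ≤ ∑ x, Pd i x * W x (y j) ^ (s / (s + ρ)) := fun j =>
    sum_nonneg fun x _ => mul_nonneg ((hPd i).1 x) (rpow_nonneg (hW.1 x _) _)
  rw [sum_iidProb_mul_Wn_rpow hW, iidProb,
    ← finsetProd_rpow _ _ (fun j _ => outDist_nonneg hW (hPd _).1 _),
    ← finsetProd_rpow _ _ (fun j _ => hPW j), ← prod_mul_distrib]
  exact prod_congr rfl fun j _ => mul_comm _ _

end ErrorBounds

section Exponents

variable {𝓧 𝓨 : Type*} [Fintype 𝓧] [Fintype 𝓨] {W : 𝓧 → 𝓨 → ℝ} {P Q : 𝓧 → ℝ}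

lemma sum_mul_rpow_nonneg (hW : IsDMC W) (hP : ∀ x, 0 ≤ P x) (y : 𝓨) (e : ℝ) :
    0 ≤ ∑ x, P x * W x y ^ e :=
  sum_nonneg fun x _ => mul_nonneg (hP x) (rpow_nonneg (hW.1 x y) e)

lemma emSum_nonneg (hW : IsDMC W) (hP : ∀ x, 0 ≤ P x) (hQ : ∀ x, 0 ≤ Q x) (ρ s : ℝ) :
    0 ≤ emSum W P Q ρ s :=
  sum_nonneg fun y _ => mul_nonneg (sum_mul_rpow_nonneg hW hP y _)
    (rpow_nonneg (sum_mul_rpow_nonneg hW hQ y _) _)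

lemma gallagerSum_nonneg (hW : IsDMC W) (hP : ∀ x, 0 ≤ P x) (hQ : ∀ x, 0 ≤ Q x) (s v : ℝ) :
    0 ≤ gallagerSum W P Q s v :=
  sum_nonneg fun y _ => mul_nonneg (rpow_nonneg (sum_mul_rpow_nonneg hW hP y _) _)
    (rpow_nonneg (outDist_nonneg hW hQ y) _)

lemma exists_emSum_lt_of_lt_Em (hW : IsDMC W) (hP : ∀ x, 0 ≤ P x) (hQ : ∀ x, 0 ≤ Q x)
    {r a : ℝ} (h : a < Em W r P Q) :
    ∃ ρ ∈ Set.Ioc (0 : ℝ) 1, ∃ s ∈ Set.Ioc (0 : ℝ) 1, emSum W P Q ρ s < exp (-(a + ρ * r)) := by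
  obtain ⟨_, ⟨ρ, hρ, rfl⟩, h⟩ :=
    exists_lt_of_lt_csSup ((Set.nonempty_Ioc.2 one_pos).image _) h
  have h' : a + ρ * r < sSup ((fun s => -log (emSum W P Q ρ s)) '' Set.Ioc 0 1) := by
    simp only at h
    unfold emSum
    linarith
  obtain ⟨_, ⟨s, hs, rfl⟩, h⟩ := exists_lt_of_lt_csSup ((Set.nonempty_Ioc.2 one_pos).image _) h'
  exact ⟨ρ, hρ, s, hs, lt_exp_neg_of_lt_neg_log (emSum_nonneg hW hP hQ ρ s) h⟩

lemma exists_gallagerSum_lt_of_lt_Ei (hW : IsDMC W) (hP : ∀ x, 0 ≤ P x) (hQ : ∀ x, 0 ≤ Q x)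
    {r a : ℝ} (h : a < Ei W r P Q) :
    ∃ ρ ∈ Set.Ioo (0 : ℝ) 1, ∃ s ∈ Set.Ioc (0 : ℝ) (1 - ρ),
      gallagerSum W P Q s (s + ρ) < exp (-(a + ρ * r)) := by
  rw [Ei] at h
  obtain ⟨_, ⟨ρ, hρ, rfl⟩, h⟩ :=
    exists_lt_of_lt_csSup ((Set.nonempty_Ioo.2 one_pos).image _) h
  obtain ⟨_, ⟨s, hs, rfl⟩, h⟩ :=
    exists_lt_of_lt_csSup ((Set.nonempty_Ioc.2 (by linarith [hρ.2])).image _) h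
  exact ⟨ρ, hρ, s, hs, lt_exp_neg_of_lt_neg_log (gallagerSum_nonneg hW hP hQ s _) (by
    simp only [gallagerSum, outDist] at h ⊢; linarith)⟩

lemma gallagerSum_one_le_emSum (hW : IsDMC W) (hP : ∀ x, 0 ≤ P x) (Q : 𝓧 → ℝ) {ρ s : ℝ}
    (hρ : 0 < ρ) (hs₀ : 0 < s) (hs₁ : s ≤ 1) :
    gallagerSum W P Q 1 (1 + ρ) ≤ emSum W P P ρ s := by
  have h1ρ : 0 < 1 + ρ := by linarith
  refine sum_le_sum fun y _ => ?_
  have hsplit : ∀ x, P x * W x y ^ (1 / (1 + ρ))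
      = (P x * W x y ^ (1 - s)) ^ (1 / (1 + ρ)) * (P x * W x y ^ (s / ρ)) ^ (ρ / (1 + ρ)) := by
    intro x
    rw [mul_rpow_mul_mul_rpow (hP x) (hW.1 x y) (by linarith) (by positivity) (by positivity)
      (by positivity) (by field_simp)]
    congr 2
    field_simp
    ring
  have hHolder := sum_rpow_mul_rpow_le univ (a := fun x => P x * W x y ^ (1 - s))
    (b := fun x => P x * W x y ^ (s / ρ)) (fun x => mul_nonneg (hP x) (rpow_nonneg (hW.1 x y) _))
    (fun x => mul_nonneg (hP x) (rpow_nonneg (hW.1 x y) _)) (by positivity) (by positivity)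
    (show 1 / (1 + ρ) + ρ / (1 + ρ) = 1 by field_simp)
  simp only [← hsplit] at hHolder
  rw [sub_self, rpow_zero, mul_one]
  calc (∑ x, P x * W x y ^ (1 / (1 + ρ))) ^ (1 + ρ)
      ≤ ((∑ x, P x * W x y ^ (1 - s)) ^ (1 / (1 + ρ)) *
          (∑ x, P x * W x y ^ (s / ρ)) ^ (ρ / (1 + ρ))) ^ (1 + ρ) := by
        gcongr
        exact sum_mul_rpow_nonneg hW hP y _
    _ = (∑ x, P x * W x y ^ (1 - s)) * (∑ x, P x * W x y ^ (s / ρ)) ^ ρ := by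
        rw [mul_rpow (rpow_nonneg (sum_mul_rpow_nonneg hW hP y _) _)
            (rpow_nonneg (sum_mul_rpow_nonneg hW hP y _) _),
          ← rpow_mul (sum_mul_rpow_nonneg hW hP y _), ← rpow_mul (sum_mul_rpow_nonneg hW hP y _)]
        field_simp
        rw [rpow_one, mul_comm]

/-- Hölder's inequality in `x`: the perspective `(s, v) ↦ v log ∑ₓ P x W(y|x)^{s/v}` is convex. -/
lemma sum_mul_rpow_div_rpow_le (hW : IsDMC W) (hP : ∀ x, 0 ≤ P x) (y : 𝓨)
    {s₁ s₂ v₁ v₂ θ : ℝ} (hs₁ : 0 ≤ s₁) (hs₂ : 0 ≤ s₂) (hv₁ : 0 < v₁) (hv₂ : 0 < v₂)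
    (hθ₀ : 0 ≤ θ) (hθ₁ : θ ≤ 1) :
    (∑ x, P x * W x y ^ (((1 - θ) * s₁ + θ * s₂) / ((1 - θ) * v₁ + θ * v₂))) ^
        ((1 - θ) * v₁ + θ * v₂)
      ≤ ((∑ x, P x * W x y ^ (s₁ / v₁)) ^ v₁) ^ (1 - θ) *
        ((∑ x, P x * W x y ^ (s₂ / v₂)) ^ v₂) ^ θ := by
  set v := (1 - θ) * v₁ + θ * v₂
  have hv : 0 < v := by
    have := min_le_left v₁ v₂; have := min_le_right v₁ v₂; nlinarith [lt_min hv₁ hv₂]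
  have hA₁ := sum_mul_rpow_nonneg hW hP y (s₁ / v₁)
  have hA₂ := sum_mul_rpow_nonneg hW hP y (s₂ / v₂)
  have hab : (1 - θ) * v₁ / v + θ * v₂ / v = 1 := by rw [← add_div, div_self hv.ne']
  have hsplit : ∀ x, P x * W x y ^ (((1 - θ) * s₁ + θ * s₂) / v) =
      (P x * W x y ^ (s₁ / v₁)) ^ ((1 - θ) * v₁ / v) *
        (P x * W x y ^ (s₂ / v₂)) ^ (θ * v₂ / v) := fun x => by
    rw [mul_rpow_mul_mul_rpow (hP x) (hW.1 x y) (div_nonneg hs₁ hv₁.le) (div_nonneg hs₂ hv₂.le)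
      (by positivity) (by positivity) hab]
    congr 2
    field_simp
  have e₁ : (1 - θ) * v₁ / v * v = v₁ * (1 - θ) := by rw [div_mul_cancel₀ _ hv.ne', mul_comm]
  have e₂ : θ * v₂ / v * v = v₂ * θ := by rw [div_mul_cancel₀ _ hv.ne', mul_comm]
  calc (∑ x, P x * W x y ^ (((1 - θ) * s₁ + θ * s₂) / v)) ^ v
      ≤ ((∑ x, P x * W x y ^ (s₁ / v₁)) ^ ((1 - θ) * v₁ / v) *
          (∑ x, P x * W x y ^ (s₂ / v₂)) ^ (θ * v₂ / v)) ^ v := by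
        gcongr
        · exact sum_mul_rpow_nonneg hW hP y _
        · exact (sum_congr rfl fun x _ => hsplit x).trans_le (sum_rpow_mul_rpow_le univ
            (fun x => mul_nonneg (hP x) (rpow_nonneg (hW.1 x y) _))
            (fun x => mul_nonneg (hP x) (rpow_nonneg (hW.1 x y) _)) (by positivity)
            (by positivity) hab)
    _ = _ := by
        rw [mul_rpow (by positivity) (by positivity), ← rpow_mul hA₁, ← rpow_mul hA₂, e₁, e₂,
          rpow_mul hA₁, rpow_mul hA₂]

/-- Hölder's inequality, once in `x` and once in `y`: `log ∘ gallagerSum` is jointly convex. -/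
lemma gallagerSum_le_rpow_mul_rpow (hW : IsDMC W) (hP : ∀ x, 0 ≤ P x) (hQ : ∀ x, 0 ≤ Q x)
    {s₁ s₂ v₁ v₂ θ : ℝ} (hs₁ : s₁ ∈ Set.Icc (0 : ℝ) 1) (hs₂ : s₂ ∈ Set.Icc (0 : ℝ) 1)
    (hv₁ : 0 < v₁) (hv₂ : 0 < v₂) (hθ₀ : 0 ≤ θ) (hθ₁ : θ ≤ 1) :
    gallagerSum W P Q ((1 - θ) * s₁ + θ * s₂) ((1 - θ) * v₁ + θ * v₂)
      ≤ gallagerSum W P Q s₁ v₁ ^ (1 - θ) * gallagerSum W P Q s₂ v₂ ^ θ := by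
  have hA : ∀ y (s' v' : ℝ), 0 ≤ (∑ x, P x * W x y ^ (s' / v')) ^ v' * outDist W Q y ^ (1 - s') :=
    fun y s' v' => mul_nonneg (rpow_nonneg (sum_mul_rpow_nonneg hW hP y _) _)
      (rpow_nonneg (outDist_nonneg hW hQ y) _)
  have hθ' : 0 ≤ 1 - θ := sub_nonneg.2 hθ₁
  refine (sum_le_sum fun y _ => ?_).trans
    (sum_rpow_mul_rpow_le univ (hA · s₁ v₁) (hA · s₂ v₂) hθ' hθ₀ (by ring))
  have hq := outDist_nonneg hW hQ y
  have hq_split : outDist W Q y ^ (1 - ((1 - θ) * s₁ + θ * s₂))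
      = (outDist W Q y ^ (1 - s₁)) ^ (1 - θ) * (outDist W Q y ^ (1 - s₂)) ^ θ := by
    rw [rpow_rpow_mul_rpow_rpow hq (sub_nonneg.2 hs₁.2) (sub_nonneg.2 hs₂.2) hθ' hθ₀]
    ring_nf
  have hA₁ := rpow_nonneg (sum_mul_rpow_nonneg hW hP y (s₁ / v₁)) v₁
  have hA₂ := rpow_nonneg (sum_mul_rpow_nonneg hW hP y (s₂ / v₂)) v₂
  rw [hq_split, mul_rpow hA₁ (rpow_nonneg hq _), mul_rpow hA₂ (rpow_nonneg hq _)]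
  calc _ ≤ ((∑ x, P x * W x y ^ (s₁ / v₁)) ^ v₁) ^ (1 - θ) *
        ((∑ x, P x * W x y ^ (s₂ / v₂)) ^ v₂) ^ θ *
          ((outDist W Q y ^ (1 - s₁)) ^ (1 - θ) * (outDist W Q y ^ (1 - s₂)) ^ θ) := by
        gcongr
        exact sum_mul_rpow_div_rpow_le hW hP y hs₁.1 hs₂.1 hv₁ hv₂ hθ₀ hθ₁
    _ = _ := by ring

/-- The miss-detection exponent interpolates between the `Em` exponent of the transmitted class
against itself (at `s = 1`) and the `Ei` exponent (at `s + ρ ≤ 1`). -/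
lemma exists_gallagerSum_one_lt (hW : IsDMC W) (hP : ∀ x, 0 ≤ P x) (hQ : ∀ x, 0 ≤ Q x)
    {r a : ℝ} (hEm : a < Em W r P P) (hEi : a < Ei W r P Q) :
    ∃ t ∈ Set.Ioo (0 : ℝ) 1, gallagerSum W P Q (1 - t) 1 < exp (-(a + r * t)) := by
  obtain ⟨ρ₁, hρ₁, s₁, hs₁, h₁⟩ := exists_emSum_lt_of_lt_Em hW hP hP hEm
  obtain ⟨ρ₀, hρ₀, s₀, hs₀, h₀⟩ := exists_gallagerSum_lt_of_lt_Ei hW hP hQ hEi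
  have hE0 := (gallagerSum_one_le_emSum hW hP Q hρ₁.1 hs₁.1 hs₁.2).trans_lt h₁
  have hden : 0 < 1 + ρ₁ - (s₀ + ρ₀) := by linarith [hs₀.2, hρ₁.1]
  set β := ρ₁ / (1 + ρ₁ - (s₀ + ρ₀))
  have hβ₀ : 0 < β := div_pos hρ₁.1 hden
  have hβ₁ : β ≤ 1 := (div_le_one hden).2 (by linarith [hs₀.2])
  have hβ : ρ₁ = β * (1 + ρ₁ - (s₀ + ρ₀)) := (div_mul_cancel₀ _ hden.ne').symm
  have hs₀₁ : s₀ < 1 := by linarith [hs₀.2, hρ₀.1]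
  refine ⟨β * (1 - s₀), ⟨mul_pos hβ₀ (by linarith),
    mul_lt_one_of_nonneg_of_lt_one_right hβ₁ (by linarith) (by linarith [hs₀.1])⟩, ?_⟩
  have hconv := gallagerSum_le_rpow_mul_rpow hW hP hQ (s₁ := 1) (v₁ := 1 + ρ₁) (s₂ := s₀)
    (v₂ := s₀ + ρ₀) ⟨zero_le_one, le_rfl⟩ ⟨hs₀.1.le, hs₀₁.le⟩ (by linarith [hρ₁.1])
    (by linarith [hs₀.1, hρ₀.1]) hβ₀.le hβ₁
  rw [show (1 - β) * 1 + β * s₀ = 1 - β * (1 - s₀) by ring,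
    show (1 - β) * (1 + ρ₁) + β * (s₀ + ρ₀) = 1 by linear_combination hβ] at hconv
  calc gallagerSum W P Q (1 - β * (1 - s₀)) 1
      ≤ gallagerSum W P Q 1 (1 + ρ₁) ^ (1 - β) * gallagerSum W P Q s₀ (s₀ + ρ₀) ^ β := hconv
    _ < exp (-(a + ρ₁ * r)) ^ (1 - β) * exp (-(a + ρ₀ * r)) ^ β :=
        mul_lt_mul' (rpow_le_rpow (gallagerSum_nonneg hW hP hQ _ _) hE0.le (by linarith))
          (rpow_lt_rpow (gallagerSum_nonneg hW hP hQ _ _) h₀ hβ₀)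
          (rpow_nonneg (gallagerSum_nonneg hW hP hQ _ _) _) (rpow_pos_of_pos (exp_pos _) _)
    _ = exp (-(a + r * (β * (1 - s₀)))) := by
        rw [← exp_mul, ← exp_mul, ← exp_add]
        congr 1
        linear_combination (-r) * hβ

lemma sum_outDist_mul_pos_of_Ei_pos (hW : IsDMC W) (hP : ∀ x, 0 ≤ P x) (hQ : ∀ x, 0 ≤ Q x)
    {r : ℝ} (hr : 0 ≤ r) (hEi : 0 < Ei W r P Q) :
    0 < ∑ y, outDist W P y * outDist W Q y := by
  refine (sum_nonneg fun y _ =>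
    mul_nonneg (outDist_nonneg hW hP y) (outDist_nonneg hW hQ y)).lt_of_ne fun h => ?_
  have hy : ∀ y, outDist W P y * outDist W Q y = 0 := fun y =>
    (sum_eq_zero_iff_of_nonneg fun y _ =>
      mul_nonneg (outDist_nonneg hW hP y) (outDist_nonneg hW hQ y)).1 h.symm y (mem_univ y)
  refine hEi.not_ge (Real.sSup_le ?_ le_rfl)
  rintro _ ⟨ρ, hρ, rfl⟩
  refine Real.sSup_le ?_ le_rfl
  rintro _ ⟨s, hs, rfl⟩
  have hG : gallagerSum W P Q s (s + ρ) = 0 := sum_eq_zero fun y _ => by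
    rcases mul_eq_zero.1 (hy y) with hPy | hQy
    · have hx : ∀ x, P x * W x y = 0 := fun x =>
        (sum_eq_zero_iff_of_nonneg fun x _ => mul_nonneg (hP x) (hW.1 x y)).1 hPy x (mem_univ x)
      have : ∑ x, P x * W x y ^ (s / (s + ρ)) = 0 := sum_eq_zero fun x _ => by
        rcases mul_eq_zero.1 (hx x) with h | h
        · rw [h, zero_mul]
        · rw [h, zero_rpow (div_pos hs.1 (by linarith [hs.1, hρ.1])).ne', mul_zero]
      rw [this, zero_rpow (by linarith [hs.1, hρ.1]), zero_mul]
    · rw [hQy, zero_rpow (by linarith [hs.2, hρ.1]), mul_zero]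
  change -ρ * r - log (gallagerSum W P Q s (s + ρ)) ≤ 0
  rw [hG, log_zero, sub_zero, neg_mul, neg_nonpos]
  exact mul_nonneg hρ.1.le hr

end Exponents

section Decoder

variable {𝓧 𝓨 : Type*} [Fintype 𝓧] {W : 𝓧 → 𝓨 → ℝ} {M N : ℕ}
  {rate : Fin M → ℝ} {Pd : Fin M → 𝓧 → ℝ} {R : Finset (Fin M)}

def classMsgs (N : ℕ) (rate : Fin M → ℝ) (i : Fin M) : Finset (Msg N rate) :=
  univ.map (Function.Embedding.sigmaMk i)

lemma mem_classMsgs {i : Fin M} {q : Msg N rate} : q ∈ classMsgs N rate i ↔ q.1 = i := by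
  refine ⟨fun h => ?_, fun h => ?_⟩
  · obtain ⟨w, -, rfl⟩ := Finset.mem_map.1 h
    rfl
  · obtain ⟨j, w⟩ := q
    subst h
    exact mem_map_of_mem _ (mem_univ w)

lemma card_classMsgs_le_exp (i : Fin M) : (#(classMsgs N rate i) : ℝ) ≤ exp (N * rate i) := by
  rw [classMsgs, card_map, card_univ, Fintype.card_fin]
  exact Nat.floor_le (exp_pos _).le

lemma numMsg_pos (hrate : ∀ i, 0 ≤ rate i) (i : Fin M) : 0 < numMsg N rate i :=
  Nat.floor_pos.2 (one_le_exp (mul_nonneg N.cast_nonneg (hrate i)))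

variable (W rate Pd R) in
def PassesThreshold (c : Cbk 𝓧 N rate) (y : Fin N → 𝓨) (q : Msg N rate) : Prop :=
  ∀ k ∉ R, exp (N * rate q.1) * iidProb (outDist W (Pd k)) y ≤ Wn W (c q.1 q.2) y

variable (W rate Pd R) in
def candidates (c : Cbk 𝓧 N rate) (y : Fin N → 𝓨) : Finset (Msg N rate) :=
  univ.filter fun q => q.1 ∈ R ∧ PassesThreshold W rate Pd R c y q

variable (W rate Pd R) in
def decoder (N : ℕ) (c : Cbk 𝓧 N rate) (y : Fin N → 𝓨) : Option (Msg N rate) :=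
  if h : (candidates W rate Pd R c y).Nonempty then
    some ((candidates W rate Pd R c y).exists_max_image (fun q => Wn W (c q.1 q.2) y) h).choose
  else none

lemma decoder_eq_some {c : Cbk 𝓧 N rate} {y : Fin N → 𝓨} {p : Msg N rate}
    (h : decoder W rate Pd R N c y = some p) :
    p ∈ candidates W rate Pd R c y ∧
      ∀ q ∈ candidates W rate Pd R c y, Wn W (c q.1 q.2) y ≤ Wn W (c p.1 p.2) y := by
  unfold decoder at h
  split_ifs at h with hne
  exact Option.some_injective _ h ▸ (exists_max_image _ _ hne).choose_spec

lemma exists_decoder_eq_some {c : Cbk 𝓧 N rate} {y : Fin N → 𝓨} {q : Msg N rate}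
    (hq : q ∈ candidates W rate Pd R c y) : ∃ p, decoder W rate Pd R N c y = some p := by
  unfold decoder
  rw [dif_pos ⟨q, hq⟩]
  exact ⟨_, rfl⟩

lemma decoder_mem {c : Cbk 𝓧 N rate} {y : Fin N → 𝓨} {p : Msg N rate}
    (h : decoder W rate Pd R N c y = some p) : p.1 ∈ R :=
  (mem_filter.1 (decoder_eq_some h).1).2.1

lemma decoder_ne_some {c : Cbk 𝓧 N rate} {y : Fin N → 𝓨} {p : Msg N rate} (hp : p.1 ∈ R)
    (h : decoder W rate Pd R N c y ≠ some p) :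
    (∃ k ∉ R, Wn W (c p.1 p.2) y < exp (N * rate p.1) * iidProb (outDist W (Pd k)) y) ∨
      ∃ q, q.1 ∈ R ∧ q ≠ p ∧ Wn W (c p.1 p.2) y ≤ Wn W (c q.1 q.2) y := by
  by_cases hpass : PassesThreshold W rate Pd R c y p
  · have hpc : p ∈ candidates W rate Pd R c y := mem_filter.2 ⟨mem_univ _, hp, hpass⟩
    obtain ⟨q, hq⟩ := exists_decoder_eq_some hpc
    have ⟨hqc, hmax⟩ := decoder_eq_some hq
    exact Or.inr ⟨q, (mem_filter.1 hqc).2.1, fun hqp => h (hqp ▸ hq), hmax p hpc⟩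
  · unfold PassesThreshold at hpass
    push Not at hpass
    exact Or.inl hpass

lemma decoder_ne_none {c : Cbk 𝓧 N rate} {y : Fin N → 𝓨} (h : decoder W rate Pd R N c y ≠ none) :
    ∃ q, q.1 ∈ R ∧ PassesThreshold W rate Pd R c y q := by
  obtain ⟨p, hp⟩ := Option.ne_none_iff_exists'.1 h
  exact ⟨p, (mem_filter.1 (decoder_eq_some hp).1).2⟩

end Decoder

section SystemError

variable {𝓧 𝓨 : Type*} [Fintype 𝓧] [Fintype 𝓨] {W : 𝓧 → 𝓨 → ℝ} {M N : ℕ}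
  {rate : Fin M → ℝ} {Pd : Fin M → 𝓧 → ℝ} {R : Finset (Fin M)}
  {D : Cbk 𝓧 N rate → (Fin N → 𝓨) → Option (Msg N rate)}

lemma Pes_nonneg (hW : IsDMC W) (hPd : ∀ i, IsDist (Pd i)) : 0 ≤ Pes W N rate Pd R D :=
  Real.sSup_nonneg <| by rintro _ ⟨p, rfl⟩; beta_reduce; split_ifs <;> exact prTx_nonneg hW hPd p _

lemma Pes_le {b : ℝ} (hb : 0 ≤ b)
    (hR : ∀ p : Msg N rate, p.1 ∈ R → prTx W rate Pd p (fun c y => D c y ≠ some p) ≤ b)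
    (hRc : ∀ p : Msg N rate, p.1 ∉ R → prTx W rate Pd p (fun c y => D c y ≠ none) ≤ b) :
    Pes W N rate Pd R D ≤ b :=
  Real.sSup_le (by rintro _ ⟨p, rfl⟩; beta_reduce; split_ifs with hp; exacts [hR p hp, hRc p hp])
    hb

lemma Pes_le_one (hW : IsDMC W) (hPd : ∀ i, IsDist (Pd i)) : Pes W N rate Pd R D ≤ 1 :=
  Pes_le zero_le_one (fun p _ => prTx_le_one hW hPd p _) fun p _ => prTx_le_one hW hPd p _

lemma le_Pes (hW : IsDMC W) (hPd : ∀ i, IsDist (Pd i)) (p : Msg N rate) :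
    (if p.1 ∈ R then prTx W rate Pd p (fun c y => D c y ≠ some p)
      else prTx W rate Pd p (fun c y => D c y ≠ none)) ≤ Pes W N rate Pd R D :=
  le_csSup ⟨1, by rintro _ ⟨q, rfl⟩; beta_reduce; split_ifs <;> exact prTx_le_one hW hPd q _⟩
    ⟨p, rfl⟩

/-- Whatever the decoder, on an output produced both by a codeword of class `i ∈ R` and by one of
class `k ∉ R`, one of the two transmissions is decoded wrongly. -/
lemma sum_outDist_mul_pow_le_two_mul_Pes (hW : IsDMC W) (hPd : ∀ i, IsDist (Pd i))
    (hrate : ∀ i, 0 ≤ rate i) {i k : Fin M} (hi : i ∈ R) (hk : k ∉ R) :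
    (∑ y, outDist W (Pd i) y * outDist W (Pd k) y) ^ N ≤ 2 * Pes W N rate Pd R D := by
  set p₁ : Msg N rate := ⟨i, ⟨0, numMsg_pos hrate i⟩⟩
  set p₂ : Msg N rate := ⟨k, ⟨0, numMsg_pos hrate k⟩⟩
  have hne : p₁ ≠ p₂ := fun h => hk ((Sigma.mk.inj_iff.1 h).1 ▸ hi)
  have h₁ := le_Pes (R := R) (D := D) hW hPd p₁
  have h₂ := le_Pes (R := R) (D := D) hW hPd p₂
  rw [if_pos hi] at h₁
  rw [if_neg hk] at h₂
  calc (∑ y, outDist W (Pd i) y * outDist W (Pd k) y) ^ N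
      = ∑ c, ∑ y, cbkProb rate Pd c * (Wn W (c p₁.1 p₁.2) y * Wn W (c p₂.1 p₂.2) y) := by
        rw [sum_comm, Fintype.sum_pow]
        refine sum_congr rfl fun y _ => ?_
        rw [sum_cbkProb_mul_mul_apply hPd hne (fun z => Wn W z y) (fun z => Wn W z y),
          sum_iidProb_mul_Wn hW, sum_iidProb_mul_Wn hW,
          iidProb, iidProb, ← prod_mul_distrib]
    _ ≤ prTx W rate Pd p₁ (fun c y => D c y ≠ some p₁) +
          prTx W rate Pd p₂ (fun c y => D c y ≠ none) := by
        rw [prTx, prTx, ← sum_add_distrib]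
        refine sum_le_sum fun c _ => ?_
        rw [← sum_add_distrib]
        refine sum_le_sum fun y _ => ?_
        have hD : D c y ≠ some p₁ ∨ D c y ≠ none := by
          by_cases hd : D c y = some p₁
          · exact Or.inr (by simp [hd])
          · exact Or.inl hd
        exact (mul_le_mul_of_nonneg_left (mul_le_mul_ite_add_mul_ite hD (Wn_nonneg hW _ _)
          (Wn_nonneg hW _ _) (Wn_le_one hW _ _) (Wn_le_one hW _ _)) (cbkProb_nonneg hPd c)).trans_eq
            (by ring)
    _ ≤ 2 * Pes W N rate Pd R D := by linarith

end SystemError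

section DecoderError

variable {𝓧 𝓨 : Type*} [Fintype 𝓧] [Fintype 𝓨] {W : 𝓧 → 𝓨 → ℝ} {M N : ℕ}
  {rate : Fin M → ℝ} {Pd : Fin M → 𝓧 → ℝ} {R : Finset (Fin M)}

lemma prTx_decoder_ne_some_le (hW : IsDMC W) (hPd : ∀ i, IsDist (Pd i)) {p : Msg N rate}
    (hp : p.1 ∈ R) {a : ℝ} (hEm : ∀ k ∈ R, a < Em W (rate k) (Pd p.1) (Pd k))
    (hEi : ∀ k ∉ R, a < Ei W (rate p.1) (Pd p.1) (Pd k)) :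
    prTx W rate Pd p (fun c y => decoder W rate Pd R N c y ≠ some p) ≤ M * exp (-(N * a)) := by
  let Ek : Fin M → Cbk 𝓧 N rate → (Fin N → 𝓨) → Prop := fun k c y =>
    if k ∈ R then ∃ q ∈ (classMsgs N rate k).erase p, Wn W (c p.1 p.2) y ≤ Wn W (c q.1 q.2) y
    else Wn W (c p.1 p.2) y < exp (N * rate p.1) * iidProb (outDist W (Pd k)) y
  have hcover : ∀ c y, decoder W rate Pd R N c y ≠ some p → ∃ k ∈ univ, Ek k c y := by
    intro c y h
    rcases decoder_ne_some hp h with ⟨k, hk, hlt⟩ | ⟨q, hq, hqp, hle⟩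
    · exact ⟨k, mem_univ k, by simp only [Ek, if_neg hk]; exact hlt⟩
    · exact ⟨q.1, mem_univ _, by
        simp only [Ek, if_pos hq]; exact ⟨q, mem_erase.2 ⟨hqp, mem_classMsgs.2 rfl⟩, hle⟩⟩
  have hterm : ∀ k, prTx W rate Pd p (Ek k) ≤ exp (-(N * a)) := by
    intro k
    by_cases hk : k ∈ R
    · obtain ⟨ρ, hρ, s, hs, hlt⟩ :=
        exists_emSum_lt_of_lt_Em hW (hPd p.1).1 (hPd k).1 (hEm k hk)
      simp only [Ek, hk, if_true]
      refine (prTx_confusion_le hW hPd p (fun q hq => mem_classMsgs.1 (mem_of_mem_erase hq))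
        (notMem_erase p _) hρ.1 hρ.2 hs.1).trans (mul_pow_le_exp_neg ?_
          (emSum_nonneg hW (hPd _).1 (hPd _).1 ρ s) hlt.le)
      calc (#((classMsgs N rate k).erase p) : ℝ) ^ ρ ≤ exp (N * rate k) ^ ρ :=
            rpow_le_rpow (Nat.cast_nonneg _)
              ((Nat.cast_le.2 card_erase_le).trans (card_classMsgs_le_exp k)) hρ.1.le
        _ = exp (N * (ρ * rate k)) := by rw [← exp_mul]; ring_nf
    · obtain ⟨t, ht, hlt⟩ := exists_gallagerSum_one_lt hW (hPd p.1).1 (hPd k).1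
        (hEm p.1 hp) (hEi k hk)
      simp only [Ek, hk, if_false]
      exact (prTx_miss_le hW hPd p k _ ht.1.le).trans (mul_pow_le_exp_neg
        (by rw [mul_assoc]) (gallagerSum_nonneg hW (hPd _).1 (hPd _).1 _ _) hlt.le)
  calc prTx W rate Pd p (fun c y => decoder W rate Pd R N c y ≠ some p)
      ≤ ∑ k, prTx W rate Pd p (Ek k) := prTx_le_sum hW hPd p univ Ek hcover
    _ ≤ ∑ _k : Fin M, exp (-(N * a)) := sum_le_sum fun k _ => hterm k
    _ = M * exp (-(N * a)) := by simp

lemma prTx_decoder_ne_none_le (hW : IsDMC W) (hPd : ∀ i, IsDist (Pd i)) {p : Msg N rate}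
    (hp : p.1 ∉ R) {a : ℝ} (hEi : ∀ k ∈ R, a < Ei W (rate k) (Pd k) (Pd p.1)) :
    prTx W rate Pd p (fun c y => decoder W rate Pd R N c y ≠ none) ≤ M * exp (-(N * a)) := by
  let Ek : Fin M → Cbk 𝓧 N rate → (Fin N → 𝓨) → Prop := fun k c y =>
    ∃ q ∈ classMsgs N rate k, exp (N * rate k) * iidProb (outDist W (Pd p.1)) y ≤ Wn W (c q.1 q.2) y
  have hcover : ∀ c y, decoder W rate Pd R N c y ≠ none → ∃ k ∈ R, Ek k c y := by
    intro c y h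
    obtain ⟨q, hq, hpass⟩ := decoder_ne_none h
    exact ⟨q.1, hq, q, mem_classMsgs.2 rfl, hpass p.1 hp⟩
  have hterm : ∀ k ∈ R, prTx W rate Pd p (Ek k) ≤ exp (-(N * a)) := by
    intro k hk
    obtain ⟨ρ, hρ, s, hs, hlt⟩ :=
      exists_gallagerSum_lt_of_lt_Ei hW (hPd k).1 (hPd p.1).1 (hEi k hk)
    refine (prTx_falseAlarm_le hW hPd p (fun q hq => mem_classMsgs.1 hq)
      (fun h => hp (mem_classMsgs.1 h ▸ hk)) (card_classMsgs_le_exp k) hρ.1 hs.1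
        (by linarith [hs.2])).trans (mul_pow_le_exp_neg ?_
          (gallagerSum_nonneg hW (hPd _).1 (hPd _).1 _ _) hlt.le)
    rw [mul_left_comm, ← mul_assoc]
  calc prTx W rate Pd p (fun c y => decoder W rate Pd R N c y ≠ none)
      ≤ ∑ k ∈ R, prTx W rate Pd p (Ek k) := prTx_le_sum hW hPd p R Ek hcover
    _ ≤ ∑ _k ∈ R, exp (-(N * a)) := sum_le_sum hterm
    _ ≤ M * exp (-(N * a)) := by
        rw [sum_const, nsmul_eq_mul]
        gcongr
        simpa using card_le_univ R

lemma Pes_decoder_le (hW : IsDMC W) (hPd : ∀ i, IsDist (Pd i)) {a : ℝ}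
    (hEm : ∀ i ∈ R, ∀ k ∈ R, a < Em W (rate k) (Pd i) (Pd k))
    (hEi : ∀ i ∈ R, ∀ k ∉ R, a < Ei W (rate i) (Pd i) (Pd k)) (N : ℕ) :
    Pes W N rate Pd R (decoder W rate Pd R N) ≤ M * exp (-(N * a)) :=
  Pes_le (by positivity)
    (fun _ hp => prTx_decoder_ne_some_le hW hPd hp (hEm _ hp) (hEi _ hp))
    fun p hp => prTx_decoder_ne_none_le hW hPd hp fun k hk => hEi k hk p.1 hp

end DecoderError

lemma csInf_le_of_mem_finset {ι κ : Type*} [Finite ι] [Finite κ] (f : ι → κ → ℝ)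
    {A : Finset ι} {B : Finset κ} {i : ι} {k : κ} (hi : i ∈ A) (hk : k ∈ B) :
    sInf {e : ℝ | ∃ i ∈ A, ∃ k ∈ B, e = f i k} ≤ f i k :=
  csInf_le ((Set.finite_range fun ik : ι × κ => f ik.1 ik.2).subset
    (by rintro _ ⟨i, -, k, -, rfl⟩; exact ⟨(i, k), rfl⟩)).bddBelow ⟨i, hi, k, hk, rfl⟩

theorem stmt1_general {𝓧 𝓨 : Type*} [Fintype 𝓧] [Fintype 𝓨]
    (W : 𝓧 → 𝓨 → ℝ) (hW : IsDMC W)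
    (M : ℕ)
    (rate : Fin M → ℝ) (hrate : ∀ i, 0 ≤ rate i)
    (Pd : Fin M → 𝓧 → ℝ) (hPd : ∀ i, IsDist (Pd i))
    (R : Finset (Fin M)) (hR : R.Nonempty) (hRc : (Finset.univ \ R).Nonempty) :
    ∃ D : (N : ℕ) → Cbk 𝓧 N rate → (Fin N → 𝓨) → Option (Msg N rate),
      (∀ N c y p, D N c y = some p → p.1 ∈ R) ∧
      min
        (sInf {e : ℝ | ∃ r ∈ R, ∃ rt ∈ R, e = Em W (rate rt) (Pd r) (Pd rt)})
        (sInf {e : ℝ | ∃ r ∈ R, ∃ rt ∈ Finset.univ \ R,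
            e = Ei W (rate r) (Pd r) (Pd rt)})
        ≤ Filter.liminf
            (fun N : ℕ => -(1 / (N : ℝ)) * Real.log (Pes W N rate Pd R (D N)))
            Filter.atTop := by
  refine ⟨decoder W rate Pd R, fun N c y p h => decoder_mem h, ?_⟩
  set T := min (sInf {e : ℝ | ∃ r ∈ R, ∃ rt ∈ R, e = Em W (rate rt) (Pd r) (Pd rt)})
    (sInf {e : ℝ | ∃ r ∈ R, ∃ rt ∈ Finset.univ \ R, e = Ei W (rate r) (Pd r) (Pd rt)})
  have hTm : ∀ i ∈ R, ∀ k ∈ R, T ≤ Em W (rate k) (Pd i) (Pd k) := fun i hi k hk =>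
    (min_le_left _ _).trans (csInf_le_of_mem_finset (fun i k => Em W (rate k) (Pd i) (Pd k)) hi hk)
  have hTi : ∀ i ∈ R, ∀ k ∉ R, T ≤ Ei W (rate i) (Pd i) (Pd k) := fun i hi k hk =>
    (min_le_right _ _).trans (csInf_le_of_mem_finset (fun i k => Ei W (rate i) (Pd i) (Pd k)) hi
      (mem_sdiff.2 ⟨mem_univ k, hk⟩))
  rcases le_or_gt T 0 with hT | hT
  · exact hT.trans (liminf_nonneg_of_nonneg fun N => mul_nonneg_of_nonpos_of_nonpos
      (neg_nonpos.2 (by positivity)) (log_nonpos (Pes_nonneg hW hPd) (Pes_le_one hW hPd)))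
  obtain ⟨i, hi⟩ := hR
  obtain ⟨k, hk⟩ := hRc
  have hk : k ∉ R := (mem_sdiff.1 hk).2
  have hov := sum_outDist_mul_pos_of_Ei_pos hW (hPd i).1 (hPd k).1 (hrate i)
    (hT.trans_le (hTi i hi k hk))
  refine le_liminf_neg_log_of_bounds one_half_pos hov (fun N => ?_) (Nat.cast_pos.2 (Fin.pos i))
    fun a ha N => Pes_decoder_le hW hPd (fun i hi k hk => ha.trans_le (hTm i hi k hk))
      (fun i hi k hk => ha.trans_le (hTi i hi k hk)) N
  linarith [sum_outDist_mul_pow_le_two_mul_Pes (D := decoder W rate Pd R N) hW hPd hrate hi hk]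

/-- Single-user error exponent (Corollary 1). -/
theorem stmt1 {𝓧 𝓨 : Type*} [Fintype 𝓧] [Fintype 𝓨] [Nonempty 𝓧] [Nonempty 𝓨]
    (W : 𝓧 → 𝓨 → ℝ) (hW : IsDMC W)
    (M : ℕ)
    (rate : Fin M → ℝ) (hrate : ∀ i, 0 ≤ rate i)
    (Pd : Fin M → 𝓧 → ℝ) (hPd : ∀ i, IsDist (Pd i))
    (R : Finset (Fin M)) (hR : R.Nonempty) (hRc : (Finset.univ \ R).Nonempty) :
    ∃ D : (N : ℕ) → Cbk 𝓧 N rate → (Fin N → 𝓨) → Option (Msg N rate),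
      (∀ N c y p, D N c y = some p → p.1 ∈ R) ∧
      min
        (sInf {e : ℝ | ∃ r ∈ R, ∃ rt ∈ R, e = Em W (rate rt) (Pd r) (Pd rt)})
        (sInf {e : ℝ | ∃ r ∈ R, ∃ rt ∈ Finset.univ \ R,
            e = Ei W (rate r) (Pd r) (Pd rt)})
        ≤ Filter.liminf
            (fun N : ℕ => -(1 / (N : ℝ)) * Real.log (Pes W N rate Pd R (D N)))
            Filter.atTop :=
  stmt1_general W hW M rate hrate Pd hPd R hR hRc
end
end

section
/- Bound on the probability that some random codeword exceeds a likelihood threshold (Step 3 of the proof of Theorem 1). Let P and Q be probability distributions on 𝒳, L ≥ 1 an integer, N ≥ 1, and τ : 𝒴^N → ℝ any function. Let X̃, X_1,…,X_L be mutually independent random vectors in 𝒳^N, the components of X̃ i.i.d. with distribution Q and the components of each X_w i.i.d. with distribution P; conditionally on all of them, let Y ∈ 𝒴^N have distribution W^N(·|X̃). Then for every ρ̃ ∈ (0,1] and s₂ > 0: Pr{ ∃ w ∈ {1,…,L} : W^N(Y|X_w) > e^{−N τ(Y)} } ≤ L^{ρ̃} · Σ_{y∈𝒴^N} ( ∏_{j=1}^N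 Σ_{x∈𝒳} Q(x) W(y_j|x) ) · ( ∏_{j=1}^N Σ_{x∈𝒳} P(x) W(y_j|x)^{s₂/ρ̃} )^{ρ̃} · e^{N s₂ τ(y)}. -/
open scoped BigOperators Classical

noncomputable section

lemma aux_marg {α : Type*} [Fintype α] {L : ℕ} (p g : α → ℝ) (hp1 : ∑ x, p x = 1) (w : Fin L) :
    ∑ F : Fin L → α, (∏ w', p (F w')) * g (F w) = ∑ x, p x * g x := by
  classical
  have key : ∀ F : Fin L → α, (∏ w', p (F w')) * g (F w)
      = ∏ w', (if w' = w then p (F w') * g (F w') else p (F w')) := by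
    intro F
    rw [← Finset.mul_prod_erase Finset.univ
        (fun w' => if w' = w then p (F w') * g (F w') else p (F w')) (Finset.mem_univ w),
      ← Finset.mul_prod_erase Finset.univ (fun w' => p (F w')) (Finset.mem_univ w),
      if_pos rfl,
      Finset.prod_congr rfl fun w' hw' => if_neg (Finset.mem_erase.mp hw').1]
    ring
  calc ∑ F : Fin L → α, (∏ w', p (F w')) * g (F w)
      = ∑ F : Fin L → α, ∏ w', (if w' = w then p (F w') * g (F w') else p (F w')) :=
        Finset.sum_congr rfl fun F _ => key F
    _ = ∏ w' : Fin L, ∑ x : α, (if w' = w then p x * g x else p x) :=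
        (Fintype.prod_sum fun w' x => if w' = w then p x * g x else p x).symm
    _ = ∑ x, p x * g x := by
        rw [Finset.prod_eq_single w (fun b _ hb => by simp only [if_neg hb]; exact hp1)
          (fun h => absurd (Finset.mem_univ w) h)]
        simp

lemma aux_jensen {ι : Type*} [Fintype ι] (p f : ι → ℝ) (hp0 : ∀ i, 0 ≤ p i)
    (hp1 : ∑ i, p i = 1) (hf : ∀ i, 0 ≤ f i) {ρ : ℝ} (hρ0 : 0 < ρ) (hρ1 : ρ ≤ 1) :
    ∑ i, p i * f i ^ ρ ≤ (∑ i, p i * f i) ^ ρ := by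
  have h := Real.arith_mean_le_rpow_mean Finset.univ p (fun i => f i ^ ρ)
    (fun i _ => hp0 i) hp1 (fun i _ => Real.rpow_nonneg (hf i) ρ)
    (p := 1/ρ) (one_le_one_div hρ0 hρ1)
  calc ∑ i, p i * f i ^ ρ
      ≤ (∑ i, p i * (f i ^ ρ) ^ (1/ρ)) ^ (1 / (1/ρ)) := h
    _ = (∑ i, p i * f i) ^ ρ := by
        rw [one_div_one_div]
        congr 1
        refine Finset.sum_congr rfl fun i _ => ?_
        rw [← Real.rpow_mul (hf i), one_div, mul_inv_cancel₀ hρ0.ne', Real.rpow_one]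

/-- Bound on the probability that some random codeword exceeds a
likelihood threshold (Step 3 of the proof of Theorem 1). -/
theorem stmt6 {𝓧 𝓨 : Type*} [Fintype 𝓧] [Fintype 𝓨] [Nonempty 𝓧] [Nonempty 𝓨]
    (W : 𝓧 → 𝓨 → ℝ) (hW : IsDMC W)
    (P Q : 𝓧 → ℝ) (hP : IsDist P) (hQ : IsDist Q)
    (L N : ℕ) (hL : 1 ≤ L) (hN : 1 ≤ N) (τ : (Fin N → 𝓨) → ℝ)
    (ρt s₂ : ℝ) (hρt : ρt ∈ Set.Ioc (0:ℝ) 1) (hs₂ : 0 < s₂) :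
    (∑ xt : Fin N → 𝓧, ∑ xw : Fin L → Fin N → 𝓧, ∑ y : Fin N → 𝓨,
        (∏ j, Q (xt j)) * (∏ w, ∏ j, P (xw w j)) * Wn W xt y *
          (if ∃ w, Real.exp (-((N : ℝ) * τ y)) < Wn W (xw w) y then (1:ℝ) else 0))
      ≤ (L : ℝ) ^ ρt *
          ∑ y : Fin N → 𝓨,
            (∏ j, ∑ x : 𝓧, Q x * W x (y j)) *
              (∏ j, ∑ x : 𝓧, P x * W x (y j) ^ (s₂ / ρt)) ^ ρt *
                Real.exp ((N : ℝ) * s₂ * τ y) := by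
  obtain ⟨hρ0, hρ1⟩ := hρt
  obtain ⟨hW0, hW1⟩ := hW
  obtain ⟨hP0, hP1⟩ := hP
  obtain ⟨hQ0, hQ1⟩ := hQ
  have hWn0 : ∀ (x : Fin N → 𝓧) (y : Fin N → 𝓨), 0 ≤ Wn W x y :=
    fun x y => Finset.prod_nonneg fun j _ => hW0 _ _
  have hpx1 : ∑ x : Fin N → 𝓧, ∏ j, P (x j) = 1 := by
    rw [← Fintype.prod_sum fun (_ : Fin N) (x : 𝓧) => P x]
    simp [hP1]
  have hPP0 : ∀ xw : Fin L → Fin N → 𝓧, (0:ℝ) ≤ ∏ w, ∏ j, P (xw w j) :=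
    fun xw => Finset.prod_nonneg fun w _ => Finset.prod_nonneg fun j _ => hP0 _
  have hPP1 : ∑ xw : Fin L → Fin N → 𝓧, ∏ w, ∏ j, P (xw w j) = 1 := by
    rw [← Fintype.prod_sum fun (_ : Fin L) (x : Fin N → 𝓧) => ∏ j, P (x j)]
    simp [hpx1]
  -- reorder sums
  have swap : ∀ (f : (Fin N → 𝓧) → (Fin L → Fin N → 𝓧) → (Fin N → 𝓨) → ℝ),
      ∑ xt, ∑ xw, ∑ y, f xt xw y = ∑ y, ∑ xt, ∑ xw, f xt xw y := by
    intro f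
    calc ∑ xt, ∑ xw, ∑ y, f xt xw y
        = ∑ xt, ∑ y, ∑ xw, f xt xw y :=
          Finset.sum_congr rfl fun xt _ => Finset.sum_comm
      _ = ∑ y, ∑ xt, ∑ xw, f xt xw y := Finset.sum_comm
  rw [swap]
  have step1 : ∀ y : Fin N → 𝓨,
      ∑ xt : Fin N → 𝓧, ∑ xw : Fin L → Fin N → 𝓧,
        (∏ j, Q (xt j)) * (∏ w, ∏ j, P (xw w j)) * Wn W xt y *
          (if ∃ w, Real.exp (-((N : ℝ) * τ y)) < Wn W (xw w) y then (1:ℝ) else 0)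
      = (∏ j, ∑ x, Q x * W x (y j)) *
        ∑ xw : Fin L → Fin N → 𝓧, (∏ w, ∏ j, P (xw w j)) *
          (if ∃ w, Real.exp (-((N : ℝ) * τ y)) < Wn W (xw w) y then (1:ℝ) else 0) := by
    intro y
    have hA : ∑ xt : Fin N → 𝓧, (∏ j, Q (xt j)) * Wn W xt y
        = ∏ j, ∑ x, Q x * W x (y j) := by
      rw [Fintype.prod_sum fun j x => Q x * W x (y j)]
      exact Finset.sum_congr rfl fun xt _ => by
        rw [Wn, ← Finset.prod_mul_distrib]
    rw [← hA, Finset.sum_mul_sum]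
    exact Finset.sum_congr rfl fun xt _ => Finset.sum_congr rfl fun xw _ => by ring
  rw [Finset.sum_congr rfl fun y _ => step1 y, Finset.mul_sum]
  refine Finset.sum_le_sum fun y _ => ?_
  have hA0 : (0:ℝ) ≤ ∏ j, ∑ x, Q x * W x (y j) :=
    Finset.prod_nonneg fun j _ => Finset.sum_nonneg fun x _ => mul_nonneg (hQ0 x) (hW0 x _)
  have hB0 : (0:ℝ) ≤ ∏ j, ∑ x, P x * W x (y j) ^ (s₂ / ρt) :=
    Finset.prod_nonneg fun j _ => Finset.sum_nonneg fun x _ =>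
      mul_nonneg (hP0 x) (Real.rpow_nonneg (hW0 x _) _)
  set c := Real.exp ((N : ℝ) * s₂ * τ y / ρt) with hc
  have hc0 : (0:ℝ) ≤ c := (Real.exp_pos _).le
  have hterm0 : ∀ x : Fin N → 𝓧, (0:ℝ) ≤ Wn W x y ^ (s₂ / ρt) * c :=
    fun x => mul_nonneg (Real.rpow_nonneg (hWn0 _ _) _) hc0
  -- bound the indicator
  have hind : ∀ xw : Fin L → Fin N → 𝓧,
      (if ∃ w, Real.exp (-((N : ℝ) * τ y)) < Wn W (xw w) y then (1:ℝ) else 0)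
      ≤ (∑ w, Wn W (xw w) y ^ (s₂ / ρt) * c) ^ ρt := by
    intro xw
    split_ifs with hex
    · obtain ⟨w0, hw0⟩ := hex
      have hsr : 0 ≤ s₂ / ρt := by positivity
      have h2 : Real.exp (-((N : ℝ) * τ y)) ^ (s₂ / ρt) ≤ Wn W (xw w0) y ^ (s₂ / ρt) :=
        Real.rpow_le_rpow (Real.exp_pos _).le hw0.le hsr
      rw [← Real.exp_mul] at h2
      have h1 : (1:ℝ) ≤ Wn W (xw w0) y ^ (s₂ / ρt) * c := by
        calc (1:ℝ) = Real.exp (-((N : ℝ) * τ y) * (s₂ / ρt)) * c := by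
              rw [hc, ← Real.exp_add,
                show -((N : ℝ) * τ y) * (s₂ / ρt) + (N : ℝ) * s₂ * τ y / ρt = 0 by
                  field_simp; ring,
                Real.exp_zero]
          _ ≤ Wn W (xw w0) y ^ (s₂ / ρt) * c := mul_le_mul_of_nonneg_right h2 hc0
      have hsum : (1:ℝ) ≤ ∑ w, Wn W (xw w) y ^ (s₂ / ρt) * c :=
        h1.trans (Finset.single_le_sum (fun w _ => hterm0 _) (Finset.mem_univ w0))
      calc (1:ℝ) = (1:ℝ) ^ ρt := (Real.one_rpow _).symm
        _ ≤ _ := Real.rpow_le_rpow zero_le_one hsum hρ0.le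
    · exact Real.rpow_nonneg (Finset.sum_nonneg fun w _ => hterm0 _) _
  -- marginalization
  have hsingle : ∑ x : Fin N → 𝓧, (∏ j, P (x j)) * (Wn W x y ^ (s₂ / ρt) * c)
      = (∏ j, ∑ x, P x * W x (y j) ^ (s₂ / ρt)) * c := by
    rw [Fintype.prod_sum fun j x => P x * W x (y j) ^ (s₂ / ρt), Finset.sum_mul]
    refine Finset.sum_congr rfl fun x _ => ?_
    rw [Wn, ← Real.finset_prod_rpow Finset.univ _ (fun j _ => hW0 _ _) _,
      Finset.prod_mul_distrib]
    ring
  have inner : ∑ xw : Fin L → Fin N → 𝓧,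
      (∏ w, ∏ j, P (xw w j)) * ∑ w, Wn W (xw w) y ^ (s₂ / ρt) * c
      = (L : ℝ) * ((∏ j, ∑ x, P x * W x (y j) ^ (s₂ / ρt)) * c) := by
    calc ∑ xw : Fin L → Fin N → 𝓧,
        (∏ w, ∏ j, P (xw w j)) * ∑ w, Wn W (xw w) y ^ (s₂ / ρt) * c
        = ∑ xw : Fin L → Fin N → 𝓧, ∑ w,
            (∏ w', ∏ j, P (xw w' j)) * (Wn W (xw w) y ^ (s₂ / ρt) * c) := by
          refine Finset.sum_congr rfl fun xw _ => ?_
          rw [Finset.mul_sum]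
      _ = ∑ w : Fin L, ∑ xw : Fin L → Fin N → 𝓧,
            (∏ w', ∏ j, P (xw w' j)) * (Wn W (xw w) y ^ (s₂ / ρt) * c) := Finset.sum_comm
      _ = ∑ w : Fin L, ∑ x : Fin N → 𝓧, (∏ j, P (x j)) * (Wn W x y ^ (s₂ / ρt) * c) :=
          Finset.sum_congr rfl fun w _ =>
            aux_marg (fun x => ∏ j, P (x j)) (fun x => Wn W x y ^ (s₂ / ρt) * c) hpx1 w
      _ = (L : ℝ) * ((∏ j, ∑ x, P x * W x (y j) ^ (s₂ / ρt)) * c) := by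
          rw [hsingle, Finset.sum_const, Finset.card_univ, Fintype.card_fin, nsmul_eq_mul]
  have hE : ∑ xw : Fin L → Fin N → 𝓧, (∏ w, ∏ j, P (xw w j)) *
        (if ∃ w, Real.exp (-((N : ℝ) * τ y)) < Wn W (xw w) y then (1:ℝ) else 0)
      ≤ (L : ℝ) ^ ρt * (∏ j, ∑ x, P x * W x (y j) ^ (s₂ / ρt)) ^ ρt *
          Real.exp ((N : ℝ) * s₂ * τ y) := by
    calc ∑ xw : Fin L → Fin N → 𝓧, (∏ w, ∏ j, P (xw w j)) *
          (if ∃ w, Real.exp (-((N : ℝ) * τ y)) < Wn W (xw w) y then (1:ℝ) else 0)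
        ≤ ∑ xw : Fin L → Fin N → 𝓧, (∏ w, ∏ j, P (xw w j)) *
            (∑ w, Wn W (xw w) y ^ (s₂ / ρt) * c) ^ ρt :=
          Finset.sum_le_sum fun xw _ =>
            mul_le_mul_of_nonneg_left (hind xw) (hPP0 xw)
      _ ≤ (∑ xw : Fin L → Fin N → 𝓧, (∏ w, ∏ j, P (xw w j)) *
            ∑ w, Wn W (xw w) y ^ (s₂ / ρt) * c) ^ ρt :=
          aux_jensen _ _ hPP0 hPP1
            (fun xw => Finset.sum_nonneg fun w _ => hterm0 _) hρ0 hρ1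
      _ = ((L : ℝ) * ((∏ j, ∑ x, P x * W x (y j) ^ (s₂ / ρt)) * c)) ^ ρt := by rw [inner]
      _ = (L : ℝ) ^ ρt * (∏ j, ∑ x, P x * W x (y j) ^ (s₂ / ρt)) ^ ρt *
            Real.exp ((N : ℝ) * s₂ * τ y) := by
          rw [Real.mul_rpow (Nat.cast_nonneg L) (mul_nonneg hB0 hc0),
            Real.mul_rpow hB0 hc0, hc, ← Real.exp_mul,
            show (N : ℝ) * s₂ * τ y / ρt * ρt = (N : ℝ) * s₂ * τ y by field_simp]
          ring
  calc (∏ j, ∑ x, Q x * W x (y j)) *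
        ∑ xw : Fin L → Fin N → 𝓧, (∏ w, ∏ j, P (xw w j)) *
          (if ∃ w, Real.exp (-((N : ℝ) * τ y)) < Wn W (xw w) y then (1:ℝ) else 0)
      ≤ (∏ j, ∑ x, Q x * W x (y j)) *
          ((L : ℝ) ^ ρt * (∏ j, ∑ x, P x * W x (y j) ^ (s₂ / ρt)) ^ ρt *
            Real.exp ((N : ℝ) * s₂ * τ y)) := mul_le_mul_of_nonneg_left hE hA0
    _ = (L : ℝ) ^ ρt * ((∏ j, ∑ x, Q x * W x (y j)) *
          (∏ j, ∑ x, P x * W x (y j) ^ (s₂ / ρt)) ^ ρt *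
            Real.exp ((N : ℝ) * s₂ * τ y)) := by ring
end
end

section
/- Multi-user Gallager-type bound for a fixed user subset (Step 1 of the proof of Theorem 2). Let K ≥ 1, let S ⊊ {1,…,K} be a proper subset, and let N ≥ 1. For each user k let P_k and Q_k be probability distributions on 𝒳_k, and for each k ∉ S let L_k ≥ 1 be an integer. Let the random vectors X_k ∈ 𝒳_k^N (k = 1,…,K) and X̃_{k,w} ∈ 𝒳_k^N (k ∉ S, w ∈ {1,…,L_k}) be mutually independent, each with i.i.d. components: the components of X_k distributed as P_k and the components of X̃_{k,w} distributed as Q_k. Conditionally on all of them, let Y ∈ 𝒴^N have distribution W^N(·|(X_1,…,X_K)). For a tuple w̃ = (w̃_k)_{k∉S} ∈ ∏_{k∉S}{1,…,L_k}, let Z_{w̃} denote the K-tuple of codewords whose k-th entry is X_k for k ∈ S and X̃_{k,w̃_k} for k ∉ S. Then for every ρ ∈ (0,1] and s ∈ (0,1]: Pr{ ∃ w̃ : W^N(Y|(X_1,…,X_K)) ≤ W^N(Y|Z_{w̃}) } ≤ (∏_{k∉S} L_k)^ρ · ( Σ_{Y∈𝒴} Σ_{x_S} ∏_{k∈S} P_k(x_k)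 · (Σ_{x_{S̄}} ∏_{k∉S} P_k(x_k) · W(Y|x)^{1−s}) · (Σ_{x_{S̄}} ∏_{k∉S} Q_k(x_k) · W(Y|x)^{s/ρ})^ρ )^N. -/
open scoped BigOperators Classical

noncomputable section

/-- `W` is a discrete memoryless multiple access channel. -/
def IsMAC {K : ℕ} {𝓧 : Fin K → Type*} {𝓨 : Type*} [Fintype 𝓨]
    (W : (∀ k, 𝓧 k) → 𝓨 → ℝ) : Prop :=
  (∀ x y, 0 ≤ W x y) ∧ ∀ x, ∑ y, W x y = 1

/-- The `N`-fold memoryless extension `W^N(y|(x_1,…,x_K))`. -/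
def WnK {K : ℕ} {𝓧 : Fin K → Type*} {𝓨 : Type*} (W : (∀ k, 𝓧 k) → 𝓨 → ℝ)
    {N : ℕ} (x : ∀ k, Fin N → 𝓧 k) (y : Fin N → 𝓨) : ℝ :=
  ∏ j, W (fun k => x k j) (y j)

/-- Merge single-letter inputs indexed by a subset `S` and by its complement
into a full input tuple. -/
def mergeS {K : ℕ} {𝓧 : Fin K → Type*} (S : Finset (Fin K))
    (xs : ∀ k : {k : Fin K // k ∈ S}, 𝓧 k.1)
    (xb : ∀ k : {k : Fin K // k ∉ S}, 𝓧 k.1) : ∀ k, 𝓧 k :=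
  fun k => if h : k ∈ S then xs ⟨k, h⟩ else xb ⟨k, h⟩

private lemma sum_pi_prod {ι : Type*} [Fintype ι] [DecidableEq ι] {τ : ι → Type*}
    [∀ i, Fintype (τ i)] (f : ∀ i, τ i → ℝ) :
    ∑ g : ∀ i, τ i, ∏ i, f i (g i) = ∏ i, ∑ t, f i t :=
  (Fintype.prod_sum f).symm

/-- single-letter complement average `g2` -/
private def g2 {K : ℕ} {𝓧 : Fin K → Type*} [∀ k, Fintype (𝓧 k)] {𝓨 : Type*}
    (W : (∀ k, 𝓧 k) → 𝓨 → ℝ) (S : Finset (Fin K)) (Q : ∀ k, 𝓧 k → ℝ) (e : ℝ)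
    (x1 : ∀ k, 𝓧 k) (y1 : 𝓨) : ℝ :=
  ∑ xb1 : ∀ k : {k : Fin K // k ∉ S}, 𝓧 k.1,
    (∏ k, Q k.1 (xb1 k)) * W (fun k => if h : k ∉ S then xb1 ⟨k, h⟩ else x1 k) y1 ^ e

private lemma GN_fact {K : ℕ} {𝓧 : Fin K → Type*} [∀ k, Fintype (𝓧 k)] {𝓨 : Type*} [Fintype 𝓨]
    (W : (∀ k, 𝓧 k) → 𝓨 → ℝ) (hW0 : ∀ x y, 0 ≤ W x y) (S : Finset (Fin K))
    (Q : ∀ k, 𝓧 k → ℝ) (e : ℝ) {N : ℕ} (x : ∀ k, Fin N → 𝓧 k) (y : Fin N → 𝓨) :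
    (∑ xb : ∀ k : {k : Fin K // k ∉ S}, Fin N → 𝓧 k.1,
      (∏ k : {k : Fin K // k ∉ S}, ∏ j, Q k.1 (xb k j)) *
        WnK W (fun k => if h : k ∉ S then xb ⟨k, h⟩ else x k) y ^ e)
    = ∏ j, g2 W S Q e (fun k => x k j) (y j) := by
  classical
  rw [← Equiv.sum_comp (Equiv.piComm fun (j : Fin N) (k : {k : Fin K // k ∉ S}) => 𝓧 k.1)
    (fun xb => (∏ k : {k : Fin K // k ∉ S}, ∏ j, Q k.1 (xb k j)) *
        WnK W (fun k => if h : k ∉ S then xb ⟨k, h⟩ else x k) y ^ e)]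
  calc ∑ z : Fin N → (∀ k : {k : Fin K // k ∉ S}, 𝓧 k.1),
        (∏ k : {k : Fin K // k ∉ S}, ∏ j, Q k.1 (z j k)) *
          WnK W (fun k => if h : k ∉ S then (fun j => z j ⟨k, h⟩) else x k) y ^ e
      = ∑ z : Fin N → (∀ k : {k : Fin K // k ∉ S}, 𝓧 k.1),
        ∏ j, ((∏ k : {k : Fin K // k ∉ S}, Q k.1 (z j k)) *
          W (fun k => if h : k ∉ S then z j ⟨k, h⟩ else x k j) (y j) ^ e) := by
        refine Finset.sum_congr rfl fun z _ => ?_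
        rw [Finset.prod_comm, WnK, ← Real.finset_prod_rpow _ _ (fun j _ => hW0 _ _) e,
          ← Finset.prod_mul_distrib]
        refine Finset.prod_congr rfl fun j _ => ?_
        have hfun : (fun k => (if h : k ∉ S then fun j' => z j' ⟨k, h⟩ else x k) j)
            = (fun k => if h : k ∉ S then z j ⟨k, h⟩ else x k j) := by
          funext k; by_cases h : k ∉ S <;> simp [h]
        rw [hfun]
    _ = ∏ j, ∑ v : ∀ k : {k : Fin K // k ∉ S}, 𝓧 k.1,
          ((∏ k : {k : Fin K // k ∉ S}, Q k.1 (v k)) *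
            W (fun k => if h : k ∉ S then v ⟨k, h⟩ else x k j) (y j) ^ e) :=
        sum_pi_prod (ι := Fin N) (τ := fun _ => (∀ k : {k : Fin K // k ∉ S}, 𝓧 k.1))
          (fun j v => (∏ k : {k : Fin K // k ∉ S}, Q k.1 (v k)) *
            W (fun k => if h : k ∉ S then v ⟨k, h⟩ else x k j) (y j) ^ e)
    _ = ∏ j, g2 W S Q e (fun k => x k j) (y j) := rfl

private lemma g2_nonneg {K : ℕ} {𝓧 : Fin K → Type*} [∀ k, Fintype (𝓧 k)] {𝓨 : Type*}
    (W : (∀ k, 𝓧 k) → 𝓨 → ℝ) (hW0 : ∀ x y, 0 ≤ W x y) (S : Finset (Fin K))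
    (Q : ∀ k, 𝓧 k → ℝ) (hQ0 : ∀ k v, 0 ≤ Q k v) (e : ℝ) (x1 : ∀ k, 𝓧 k) (y1 : 𝓨) :
    0 ≤ g2 W S Q e x1 y1 :=
  Finset.sum_nonneg fun xb1 _ => mul_nonneg (Finset.prod_nonneg fun k _ => hQ0 k.1 _)
    (Real.rpow_nonneg (hW0 _ _) e)

private def Fl {K : ℕ} {𝓧 : Fin K → Type*} [∀ k, Fintype (𝓧 k)] {𝓨 : Type*}
    (W : (∀ k, 𝓧 k) → 𝓨 → ℝ) (S : Finset (Fin K)) (P Q : ∀ k, 𝓧 k → ℝ)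
    (a e ρ : ℝ) (x1 : ∀ k, 𝓧 k) (y1 : 𝓨) : ℝ :=
  (∏ k, P k (x1 k)) * W x1 y1 ^ a * g2 W S Q e x1 y1 ^ ρ

private lemma single_letter {K : ℕ} {𝓧 : Fin K → Type*} [∀ k, Fintype (𝓧 k)] {𝓨 : Type*}
    [Fintype 𝓨] (W : (∀ k, 𝓧 k) → 𝓨 → ℝ) (hW0 : ∀ x y, 0 ≤ W x y) (S : Finset (Fin K))
    (P Q : ∀ k, 𝓧 k → ℝ) (hQ0 : ∀ k v, 0 ≤ Q k v) (a e ρ : ℝ) {N : ℕ} :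
    ∑ x : ∀ k, Fin N → 𝓧 k, ∑ y : Fin N → 𝓨,
      (∏ k, ∏ j, P k (x k j)) * WnK W x y ^ a *
        (∏ j, g2 W S Q e (fun k => x k j) (y j)) ^ ρ
    = (∑ x1 : ∀ k, 𝓧 k, ∑ y1 : 𝓨, Fl W S P Q a e ρ x1 y1) ^ N := by
  classical
  have hpoint : ∀ (x : ∀ k, Fin N → 𝓧 k) (y : Fin N → 𝓨),
      (∏ k, ∏ j, P k (x k j)) * WnK W x y ^ a *
        (∏ j, g2 W S Q e (fun k => x k j) (y j)) ^ ρ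
      = ∏ j, Fl W S P Q a e ρ (fun k => x k j) (y j) := by
    intro x y
    rw [Finset.prod_comm (f := fun k j => P k (x k j)), WnK,
      ← Real.finset_prod_rpow _ _ (fun j _ => hW0 _ _) a,
      ← Real.finset_prod_rpow _ _ (fun j _ => g2_nonneg W hW0 S Q hQ0 e _ _) ρ,
      ← Finset.prod_mul_distrib, ← Finset.prod_mul_distrib]
    rfl
  calc ∑ x : ∀ k, Fin N → 𝓧 k, ∑ y : Fin N → 𝓨,
        (∏ k, ∏ j, P k (x k j)) * WnK W x y ^ a *
          (∏ j, g2 W S Q e (fun k => x k j) (y j)) ^ ρ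
      = ∑ x : ∀ k, Fin N → 𝓧 k, ∏ j, ∑ y1 : 𝓨, Fl W S P Q a e ρ (fun k => x k j) y1 := by
        refine Finset.sum_congr rfl fun x _ => ?_
        rw [show (∑ y : Fin N → 𝓨, (∏ k, ∏ j, P k (x k j)) * WnK W x y ^ a *
            (∏ j, g2 W S Q e (fun k => x k j) (y j)) ^ ρ)
          = ∑ y : Fin N → 𝓨, ∏ j, Fl W S P Q a e ρ (fun k => x k j) (y j) from
            Finset.sum_congr rfl fun y _ => hpoint x y]
        exact sum_pi_prod (ι := Fin N) (τ := fun _ => 𝓨)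
          (fun j y1 => Fl W S P Q a e ρ (fun k => x k j) y1)
    _ = (∑ x1 : ∀ k, 𝓧 k, ∑ y1 : 𝓨, Fl W S P Q a e ρ x1 y1) ^ N := by
        rw [← Equiv.sum_comp (Equiv.piComm fun (j : Fin N) (k : Fin K) => 𝓧 k)
          (fun x => ∏ j, ∑ y1 : 𝓨, Fl W S P Q a e ρ (fun k => x k j) y1)]
        simp only [Equiv.piComm_apply, Function.swap]
        rw [show (∑ z : ∀ (j : Fin N) (k : Fin K), 𝓧 k,
            ∏ j, ∑ y1 : 𝓨, Fl W S P Q a e ρ (fun k => z j k) y1)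
          = ∏ j : Fin N, ∑ x1 : ∀ k, 𝓧 k, ∑ y1 : 𝓨, Fl W S P Q a e ρ x1 y1 from
            sum_pi_prod (ι := Fin N) (τ := fun _ => ∀ k, 𝓧 k)
              (fun _ x1 => ∑ y1 : 𝓨, Fl W S P Q a e ρ x1 y1)]
        rw [Finset.prod_const, Finset.card_univ, Fintype.card_fin]

private def splitS {K : ℕ} {𝓧 : Fin K → Type*} (S : Finset (Fin K)) :
    (∀ k, 𝓧 k) ≃ (∀ k : {k : Fin K // k ∈ S}, 𝓧 k.1) × (∀ k : {k : Fin K // k ∉ S}, 𝓧 k.1) where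
  toFun x := (fun k => x k.1, fun k => x k.1)
  invFun p := mergeS S p.1 p.2
  left_inv x := by
    funext k; unfold mergeS; by_cases h : k ∈ S <;> simp [h]
  right_inv p := by
    refine Prod.ext ?_ ?_ <;> funext k
    · show mergeS S p.1 p.2 k.1 = p.1 k
      unfold mergeS; rw [dif_pos k.2]
    · show mergeS S p.1 p.2 k.1 = p.2 k
      unfold mergeS; rw [dif_neg k.2]

private lemma base_eq {K : ℕ} {𝓧 : Fin K → Type*} [∀ k, Fintype (𝓧 k)] {𝓨 : Type*}
    [Fintype 𝓨] (W : (∀ k, 𝓧 k) → 𝓨 → ℝ) (S : Finset (Fin K))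
    (P Q : ∀ k, 𝓧 k → ℝ) (a e ρ : ℝ) :
    ∑ x1 : ∀ k, 𝓧 k, ∑ y1 : 𝓨, Fl W S P Q a e ρ x1 y1
    = ∑ y : 𝓨, ∑ xs : ∀ k : {k : Fin K // k ∈ S}, 𝓧 k.1,
        (∏ k, P k.1 (xs k)) *
          ((∑ xb : ∀ k : {k : Fin K // k ∉ S}, 𝓧 k.1,
              (∏ k, P k.1 (xb k)) * W (mergeS S xs xb) y ^ a) *
            (∑ xb : ∀ k : {k : Fin K // k ∉ S}, 𝓧 k.1,
              (∏ k, Q k.1 (xb k)) * W (mergeS S xs xb) y ^ e) ^ ρ) := by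
  classical
  rw [Finset.sum_comm]
  refine Finset.sum_congr rfl fun y _ => ?_
  rw [← Equiv.sum_comp (splitS (𝓧 := 𝓧) S).symm (fun x1 => Fl W S P Q a e ρ x1 y),
    Fintype.sum_prod_type]
  have hmerge : ∀ (xs : ∀ k : {k : Fin K // k ∈ S}, 𝓧 k.1)
      (xb : ∀ k : {k : Fin K // k ∉ S}, 𝓧 k.1),
      (splitS (𝓧 := 𝓧) S).symm (xs, xb) = mergeS S xs xb := fun _ _ => rfl
  have hg2m : ∀ (xs : ∀ k : {k : Fin K // k ∈ S}, 𝓧 k.1)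
      (xb0 : ∀ k : {k : Fin K // k ∉ S}, 𝓧 k.1),
      g2 W S Q e (mergeS S xs xb0) y
        = ∑ xb : ∀ k : {k : Fin K // k ∉ S}, 𝓧 k.1,
            (∏ k, Q k.1 (xb k)) * W (mergeS S xs xb) y ^ e := by
    intro xs xb0
    refine Finset.sum_congr rfl fun xb1 _ => ?_
    have : (fun k => if h : k ∉ S then xb1 ⟨k, h⟩ else mergeS S xs xb0 k)
        = mergeS S xs xb1 := by
      funext k; unfold mergeS; by_cases h : k ∈ S <;> simp [h]
    rw [this]
  have hP : ∀ (xs : ∀ k : {k : Fin K // k ∈ S}, 𝓧 k.1)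
      (xb0 : ∀ k : {k : Fin K // k ∉ S}, 𝓧 k.1),
      (∏ k, P k (mergeS S xs xb0 k))
        = (∏ k : {k : Fin K // k ∈ S}, P k.1 (xs k)) *
            ∏ k : {k : Fin K // k ∉ S}, P k.1 (xb0 k) := by
    intro xs xb0
    rw [← Fintype.prod_subtype_mul_prod_subtype (fun k => k ∈ S)
      (fun k => P k (mergeS S xs xb0 k))]
    congr 1
    · refine Finset.prod_congr (by congr!) fun k _ => ?_
      show P k.1 (mergeS S xs xb0 k.1) = P k.1 (xs k)
      unfold mergeS; rw [dif_pos k.2]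
    · refine Finset.prod_congr (by congr!) fun k _ => ?_
      show P k.1 (mergeS S xs xb0 k.1) = P k.1 (xb0 k)
      unfold mergeS; rw [dif_neg k.2]
  refine Finset.sum_congr rfl fun xs _ => ?_
  calc ∑ xb0 : ∀ k : {k : Fin K // k ∉ S}, 𝓧 k.1,
        Fl W S P Q a e ρ ((splitS (𝓧 := 𝓧) S).symm (xs, xb0)) y
      = ∑ xb0 : ∀ k : {k : Fin K // k ∉ S}, 𝓧 k.1,
          (∏ k : {k : Fin K // k ∈ S}, P k.1 (xs k)) *
            ((∏ k : {k : Fin K // k ∉ S}, P k.1 (xb0 k)) * W (mergeS S xs xb0) y ^ a *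
              (∑ xb : ∀ k : {k : Fin K // k ∉ S}, 𝓧 k.1,
                (∏ k, Q k.1 (xb k)) * W (mergeS S xs xb) y ^ e) ^ ρ) := by
        refine Finset.sum_congr rfl fun xb0 _ => ?_
        rw [hmerge]
        show (∏ k, P k (mergeS S xs xb0 k)) * W (mergeS S xs xb0) y ^ a *
            g2 W S Q e (mergeS S xs xb0) y ^ ρ = _
        rw [hP, hg2m]; ring
    _ = (∏ k, P k.1 (xs k)) *
          ((∑ xb : ∀ k : {k : Fin K // k ∉ S}, 𝓧 k.1,
              (∏ k, P k.1 (xb k)) * W (mergeS S xs xb) y ^ a) *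
            (∑ xb : ∀ k : {k : Fin K // k ∉ S}, 𝓧 k.1,
              (∏ k, Q k.1 (xb k)) * W (mergeS S xs xb) y ^ e) ^ ρ) := by
        rw [← Finset.mul_sum, ← Finset.sum_mul]

private lemma sum_prob_pi {ι : Type*} [Fintype ι] [DecidableEq ι] {τ : ι → Type*}
    [∀ i, Fintype (τ i)] (q : ∀ i, τ i → ℝ) (hq : ∀ i, ∑ v, q i v = 1) :
    ∑ g : ∀ i, τ i, ∏ i, q i (g i) = 1 := by
  rw [sum_pi_prod]; exact Finset.prod_eq_one fun i _ => hq i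

private lemma point_bound {ι : Type*} [Fintype ι] (A : ℝ) (B : ι → ℝ)
    (hA0 : 0 ≤ A) (hB0 : ∀ i, 0 ≤ B i) {ρ s : ℝ} (hρ0 : 0 < ρ) (hs0 : 0 < s) :
    A * (if ∃ i, A ≤ B i then (1:ℝ) else 0)
      ≤ A ^ (1 - s) * (∑ i, B i ^ (s / ρ)) ^ ρ := by
  have hsum0 : 0 ≤ ∑ i, B i ^ (s / ρ) :=
    Finset.sum_nonneg fun i _ => Real.rpow_nonneg (hB0 i) _
  have hRHS0 : 0 ≤ A ^ (1 - s) * (∑ i, B i ^ (s / ρ)) ^ ρ :=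
    mul_nonneg (Real.rpow_nonneg hA0 _) (Real.rpow_nonneg hsum0 _)
  by_cases hex : ∃ i, A ≤ B i
  · rw [if_pos hex]
    rcases eq_or_lt_of_le hA0 with hA0' | hA0'
    · rw [mul_one, ← hA0']; exact le_of_eq_of_le hA0' (by rw [← hA0'] at hRHS0 ⊢; exact hRHS0)
    · rcases hex with ⟨i0, hi0⟩
      have h1 : A ^ (s / ρ) ≤ B i0 ^ (s / ρ) :=
        Real.rpow_le_rpow hA0 hi0 (by positivity)
      have h2 : B i0 ^ (s / ρ) ≤ ∑ i, B i ^ (s / ρ) :=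
        Finset.single_le_sum (fun i _ => Real.rpow_nonneg (hB0 i) _) (Finset.mem_univ i0)
      have h3 : A ^ s ≤ (∑ i, B i ^ (s / ρ)) ^ ρ := by
        calc A ^ s = (A ^ (s / ρ)) ^ ρ := by
              rw [← Real.rpow_mul hA0, div_mul_cancel₀ _ hρ0.ne']
          _ ≤ (∑ i, B i ^ (s / ρ)) ^ ρ :=
              Real.rpow_le_rpow (Real.rpow_nonneg hA0 _) (h1.trans h2) hρ0.le
      calc A * 1 = A ^ (1 - s) * A ^ s := by
            rw [mul_one, ← Real.rpow_add hA0', sub_add_cancel, Real.rpow_one]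
        _ ≤ A ^ (1 - s) * (∑ i, B i ^ (s / ρ)) ^ ρ :=
            mul_le_mul_of_nonneg_left h3 (Real.rpow_nonneg hA0 _)
  · rw [if_neg hex, mul_zero]; exact hRHS0

private lemma jensen_rpow {ι : Type*} [Fintype ι] (w t : ι → ℝ) (hw : ∀ i, 0 ≤ w i)
    (hw1 : ∑ i, w i = 1) (ht : ∀ i, 0 ≤ t i) {ρ : ℝ} (hρ0 : 0 < ρ) (hρ1 : ρ ≤ 1) :
    ∑ i, w i * t i ^ ρ ≤ (∑ i, w i * t i) ^ ρ := by
  have hp : (1:ℝ) ≤ 1 / ρ := by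
    rw [le_div_iff₀ hρ0]; simpa using hρ1
  have h := Real.arith_mean_le_rpow_mean Finset.univ w (fun i => t i ^ ρ)
    (fun i _ => hw i) hw1 (fun i _ => Real.rpow_nonneg (ht i) ρ) hp
  have hz : ∀ i, (t i ^ ρ) ^ (1 / ρ : ℝ) = t i := fun i => by
    rw [← Real.rpow_mul (ht i), mul_one_div_cancel hρ0.ne', Real.rpow_one]
  calc ∑ i, w i * t i ^ ρ
      ≤ (∑ i, w i * (t i ^ ρ) ^ (1 / ρ : ℝ)) ^ (1 / (1 / ρ) : ℝ) := h
    _ = (∑ i, w i * t i) ^ ρ := by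
        rw [one_div_one_div]
        exact congrArg (· ^ ρ) (Finset.sum_congr rfl fun i _ => by rw [hz i])


private def piProdEquiv {ι : Type*} {A B : ι → Type*} :
    (∀ i, A i × B i) ≃ (∀ i, A i) × (∀ i, B i) where
  toFun g := (fun i => (g i).1, fun i => (g i).2)
  invFun p i := (p.1 i, p.2 i)
  left_inv _ := rfl
  right_inv _ := rfl


private lemma marg {ι : Type*} [Fintype ι] [DecidableEq ι] {κ V : ι → Type*}
    [∀ i, Fintype (κ i)] [∀ i, DecidableEq (κ i)] [∀ i, Fintype (V i)]
    (q : ∀ i, V i → ℝ) (hq : ∀ i, ∑ v, q i v = 1) (w : ∀ i, κ i)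
    (f : (∀ i, V i) → ℝ) :
    ∑ xt : ∀ i, κ i → V i, (∏ i, ∏ c, q i (xt i c)) * f (fun i => xt i (w i))
      = ∑ v : ∀ i, V i, (∏ i, q i (v i)) * f v := by
  classical
  let e : (∀ i, κ i → V i) ≃ (∀ i, V i) × (∀ i, { c : κ i // c ≠ w i } → V i) :=
    (Equiv.piCongrRight fun i => Equiv.funSplitAt (w i) (V i)).trans piProdEquiv
  rw [← Equiv.sum_comp e.symm
    (fun xt => (∏ i, ∏ c, q i (xt i c)) * f (fun i => xt i (w i))), Fintype.sum_prod_type]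
  have he : ∀ (v : ∀ i, V i) (r : ∀ i, { c : κ i // c ≠ w i } → V i) (i : ι) (c : κ i),
      e.symm (v, r) i c = if h : c = w i then v i else r i ⟨c, h⟩ := by
    intro v r i c
    simp [e, piProdEquiv, Equiv.funSplitAt_symm_apply]
  have hsum : ∀ (v : ∀ i, V i) (r : ∀ i, { c : κ i // c ≠ w i } → V i),
      (∏ i, ∏ c, q i (e.symm (v, r) i c)) * f (fun i => e.symm (v, r) i (w i))
        = ((∏ i, q i (v i)) * f v) * ∏ i, ∏ c : { c : κ i // c ≠ w i }, q i (r i c) := by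
    intro v r
    have hval : (fun i => e.symm (v, r) i (w i)) = v := by
      funext i; rw [he v r i (w i), dif_pos rfl]
    have hprod : ∀ i, (∏ c, q i (e.symm (v, r) i c))
        = q i (v i) * ∏ c : { c : κ i // c ≠ w i }, q i (r i c) := by
      intro i
      rw [Fintype.prod_eq_mul_prod_compl (w i) (fun c => q i (e.symm (v, r) i c))]
      congr 1
      · rw [he v r i (w i), dif_pos rfl]
      · rw [Finset.prod_subtype ({w i}ᶜ : Finset (κ i))
          (fun c => by simp : ∀ c, c ∈ ({w i}ᶜ : Finset (κ i)) ↔ c ≠ w i)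
          (fun c => q i (e.symm (v, r) i c))]
        refine Finset.prod_congr rfl fun c _ => ?_
        rw [he v r i c, dif_neg c.2]
    calc (∏ i, ∏ c, q i (e.symm (v, r) i c)) * f (fun i => e.symm (v, r) i (w i))
        = (∏ i, q i (v i) * ∏ c : { c : κ i // c ≠ w i }, q i (r i c)) * f v := by
          rw [hval]; exact congrArg (· * f v) (Finset.prod_congr rfl fun i _ => hprod i)
      _ = ((∏ i, q i (v i)) * f v) * ∏ i, ∏ c : { c : κ i // c ≠ w i }, q i (r i c) := by
          rw [Finset.prod_mul_distrib]; ring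
  calc ∑ v : ∀ i, V i, ∑ r : ∀ i, { c : κ i // c ≠ w i } → V i,
        (∏ i, ∏ c, q i (e.symm (v, r) i c)) * f (fun i => e.symm (v, r) i (w i))
      = ∑ v : ∀ i, V i, ((∏ i, q i (v i)) * f v) *
          ∑ r : ∀ i, { c : κ i // c ≠ w i } → V i,
            ∏ i, ∏ c : { c : κ i // c ≠ w i }, q i (r i c) := by
        refine Finset.sum_congr rfl fun v _ => ?_
        rw [Finset.mul_sum]
        exact Finset.sum_congr rfl fun r _ => hsum v r
    _ = ∑ v : ∀ i, V i, (∏ i, q i (v i)) * f v := by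
        refine Finset.sum_congr rfl fun v _ => ?_
        have : (∑ r : ∀ i, { c : κ i // c ≠ w i } → V i,
            ∏ i, ∏ c : { c : κ i // c ≠ w i }, q i (r i c)) = 1 := by
          rw [sum_pi_prod (fun i (h : { c : κ i // c ≠ w i } → V i) => ∏ c, q i (h c))]
          refine Finset.prod_eq_one fun i _ => ?_
          have h2 := (sum_pi_prod (ι := { c : κ i // c ≠ w i }) (τ := fun _ => V i)
            (fun _ u => q i u)).trans (Finset.prod_eq_one fun c _ => hq i)
          convert h2 using 2
          all_goals congr!
        rw [this, mul_one]


set_option maxHeartbeats 2000000 in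
/-- Multi-user Gallager-type bound for a fixed user subset
(Step 1 of the proof of Theorem 2). -/
theorem stmt8 {K : ℕ} (hK : 1 ≤ K) {𝓧 : Fin K → Type*}
    [∀ k, Fintype (𝓧 k)] [∀ k, Nonempty (𝓧 k)]
    {𝓨 : Type*} [Fintype 𝓨] [Nonempty 𝓨]
    (W : (∀ k, 𝓧 k) → 𝓨 → ℝ) (hW : IsMAC W)
    (S : Finset (Fin K)) (hS : S ≠ Finset.univ)
    (N : ℕ) (hN : 1 ≤ N)
    (P Q : ∀ k, 𝓧 k → ℝ) (hP : ∀ k, IsDist (P k)) (hQ : ∀ k, IsDist (Q k))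
    (L : Fin K → ℕ) (hL : ∀ k ∉ S, 1 ≤ L k)
    (ρ s : ℝ) (hρ : ρ ∈ Set.Ioc (0:ℝ) 1) (hs : s ∈ Set.Ioc (0:ℝ) 1) :
    (∑ x : ∀ k, Fin N → 𝓧 k,
     ∑ xt : ∀ k : {k : Fin K // k ∉ S}, Fin (L k.1) → Fin N → 𝓧 k.1,
     ∑ y : Fin N → 𝓨,
        (∏ k, ∏ j, P k (x k j)) *
          (∏ k : {k : Fin K // k ∉ S}, ∏ w, ∏ j, Q k.1 (xt k w j)) *
            WnK W x y *
              (if ∃ wt : ∀ k : {k : Fin K // k ∉ S}, Fin (L k.1),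
                  WnK W x y ≤
                    WnK W (fun k => if h : k ∉ S then xt ⟨k, h⟩ (wt ⟨k, h⟩) else x k) y
                then (1:ℝ) else 0))
      ≤ (∏ k : {k : Fin K // k ∉ S}, (L k.1 : ℝ)) ^ ρ *
          (∑ y : 𝓨, ∑ xs : ∀ k : {k : Fin K // k ∈ S}, 𝓧 k.1,
              (∏ k, P k.1 (xs k)) *
                ((∑ xb : ∀ k : {k : Fin K // k ∉ S}, 𝓧 k.1,
                    (∏ k, P k.1 (xb k)) * W (mergeS S xs xb) y ^ (1 - s)) *
                  (∑ xb : ∀ k : {k : Fin K // k ∉ S}, 𝓧 k.1,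
                    (∏ k, Q k.1 (xb k)) * W (mergeS S xs xb) y ^ (s / ρ)) ^ ρ)) ^ N := by
  classical
  obtain ⟨hρ0, hρ1⟩ := hρ
  obtain ⟨hs0, hs1⟩ := hs
  obtain ⟨hW0, hWsum⟩ := hW
  have hP0 : ∀ k v, 0 ≤ P k v := fun k => (hP k).1
  have hQ0 : ∀ k v, 0 ≤ Q k v := fun k => (hQ k).1
  have hWnK0 : ∀ (x : ∀ k, Fin N → 𝓧 k) (y : Fin N → 𝓨), 0 ≤ WnK W x y :=
    fun x y => Finset.prod_nonneg fun j _ => hW0 _ _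
  -- notation-heavy abbreviations are written out in full below
  have hGN0 : ∀ (x : ∀ k, Fin N → 𝓧 k) (y : Fin N → 𝓨),
      0 ≤ ∑ xb : ∀ k : {k : Fin K // k ∉ S}, Fin N → 𝓧 k.1,
        (∏ k : {k : Fin K // k ∉ S}, ∏ j, Q k.1 (xb k j)) *
          WnK W (fun k => if h : k ∉ S then xb ⟨k, h⟩ else x k) y ^ (s / ρ) :=
    fun x y => Finset.sum_nonneg fun xb _ => mul_nonneg
      (Finset.prod_nonneg fun k _ => Finset.prod_nonneg fun j _ => hQ0 k.1 _)
      (Real.rpow_nonneg (hWnK0 _ _) _)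
  have hNc0 : 0 ≤ ∏ k : {k : Fin K // k ∉ S}, (L k.1 : ℝ) :=
    Finset.prod_nonneg fun k _ => Nat.cast_nonneg _
  have hQsum : (∑ xt : ∀ k : {k : Fin K // k ∉ S}, Fin (L k.1) → Fin N → 𝓧 k.1,
      ∏ k : {k : Fin K // k ∉ S}, ∏ w, ∏ j, Q k.1 (xt k w j)) = 1 := by
    refine sum_prob_pi (ι := {k : Fin K // k ∉ S}) (τ := fun k => Fin (L k.1) → Fin N → 𝓧 k.1)
      (fun k h => ∏ w, ∏ j, Q k.1 (h w j)) fun k => ?_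
    refine sum_prob_pi (ι := Fin (L k.1)) (τ := fun _ => Fin N → 𝓧 k.1)
      (fun w g => ∏ j, Q k.1 (g j)) fun w => ?_
    exact sum_prob_pi (ι := Fin N) (τ := fun _ => 𝓧 k.1) (fun j v => Q k.1 v)
      fun j => (hQ k.1).2
  have hmarg : ∀ (x : ∀ k, Fin N → 𝓧 k) (y : Fin N → 𝓨)
      (wt : ∀ k : {k : Fin K // k ∉ S}, Fin (L k.1)),
      (∑ xt : ∀ k : {k : Fin K // k ∉ S}, Fin (L k.1) → Fin N → 𝓧 k.1,
        (∏ k : {k : Fin K // k ∉ S}, ∏ w, ∏ j, Q k.1 (xt k w j)) *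
          WnK W (fun k => if h : k ∉ S then xt ⟨k, h⟩ (wt ⟨k, h⟩) else x k) y ^ (s / ρ))
      = ∑ xb : ∀ k : {k : Fin K // k ∉ S}, Fin N → 𝓧 k.1,
          (∏ k : {k : Fin K // k ∉ S}, ∏ j, Q k.1 (xb k j)) *
            WnK W (fun k => if h : k ∉ S then xb ⟨k, h⟩ else x k) y ^ (s / ρ) := by
    intro x y wt
    exact marg (ι := {k : Fin K // k ∉ S}) (κ := fun k => Fin (L k.1))
      (V := fun k => Fin N → 𝓧 k.1)
      (q := fun k (h : Fin N → 𝓧 k.1) => ∏ j, Q k.1 (h j))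
      (fun k => sum_prob_pi (ι := Fin N) (τ := fun _ => 𝓧 k.1) (fun j v => Q k.1 v)
        fun j => (hQ k.1).2) wt
      (fun v => WnK W (fun k => if h : k ∉ S then v ⟨k, h⟩ else x k) y ^ (s / ρ))
  calc (∑ x : ∀ k, Fin N → 𝓧 k,
     ∑ xt : ∀ k : {k : Fin K // k ∉ S}, Fin (L k.1) → Fin N → 𝓧 k.1,
     ∑ y : Fin N → 𝓨,
        (∏ k, ∏ j, P k (x k j)) *
          (∏ k : {k : Fin K // k ∉ S}, ∏ w, ∏ j, Q k.1 (xt k w j)) *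
            WnK W x y *
              (if ∃ wt : ∀ k : {k : Fin K // k ∉ S}, Fin (L k.1),
                  WnK W x y ≤
                    WnK W (fun k => if h : k ∉ S then xt ⟨k, h⟩ (wt ⟨k, h⟩) else x k) y
                then (1:ℝ) else 0))
      ≤ ∑ x : ∀ k, Fin N → 𝓧 k,
        ∑ xt : ∀ k : {k : Fin K // k ∉ S}, Fin (L k.1) → Fin N → 𝓧 k.1,
        ∑ y : Fin N → 𝓨,
          ((∏ k, ∏ j, P k (x k j)) *
            (∏ k : {k : Fin K // k ∉ S}, ∏ w, ∏ j, Q k.1 (xt k w j))) *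
              (WnK W x y ^ (1 - s) *
                (∑ wt : ∀ k : {k : Fin K // k ∉ S}, Fin (L k.1),
                  WnK W (fun k => if h : k ∉ S then xt ⟨k, h⟩ (wt ⟨k, h⟩) else x k) y
                    ^ (s / ρ)) ^ ρ) := by
        refine Finset.sum_le_sum fun x _ => Finset.sum_le_sum fun xt _ =>
          Finset.sum_le_sum fun y _ => ?_
        rw [mul_assoc]
        refine mul_le_mul_of_nonneg_left ?_ (mul_nonneg
          (Finset.prod_nonneg fun k _ => Finset.prod_nonneg fun j _ => hP0 k _)
          (Finset.prod_nonneg fun k _ => Finset.prod_nonneg fun w _ =>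
            Finset.prod_nonneg fun j _ => hQ0 k.1 _))
        exact point_bound (ι := ∀ k : {k : Fin K // k ∉ S}, Fin (L k.1)) (WnK W x y)
          (fun wt => WnK W (fun k => if h : k ∉ S then xt ⟨k, h⟩ (wt ⟨k, h⟩) else x k) y)
          (hWnK0 x y) (fun wt => hWnK0 _ _) hρ0 hs0
    _ = ∑ x : ∀ k, Fin N → 𝓧 k, ∑ y : Fin N → 𝓨,
          ((∏ k, ∏ j, P k (x k j)) * WnK W x y ^ (1 - s)) *
            ∑ xt : ∀ k : {k : Fin K // k ∉ S}, Fin (L k.1) → Fin N → 𝓧 k.1,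
              (∏ k : {k : Fin K // k ∉ S}, ∏ w, ∏ j, Q k.1 (xt k w j)) *
                (∑ wt : ∀ k : {k : Fin K // k ∉ S}, Fin (L k.1),
                  WnK W (fun k => if h : k ∉ S then xt ⟨k, h⟩ (wt ⟨k, h⟩) else x k) y
                    ^ (s / ρ)) ^ ρ := by
        refine Finset.sum_congr rfl fun x _ => ?_
        rw [Finset.sum_comm]
        refine Finset.sum_congr rfl fun y _ => ?_
        rw [Finset.mul_sum]
        exact Finset.sum_congr rfl fun xt _ => by ring
    _ ≤ ∑ x : ∀ k, Fin N → 𝓧 k, ∑ y : Fin N → 𝓨,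
          ((∏ k, ∏ j, P k (x k j)) * WnK W x y ^ (1 - s)) *
            (((∏ k : {k : Fin K // k ∉ S}, (L k.1 : ℝ))) *
              ∑ xb : ∀ k : {k : Fin K // k ∉ S}, Fin N → 𝓧 k.1,
                (∏ k : {k : Fin K // k ∉ S}, ∏ j, Q k.1 (xb k j)) *
                  WnK W (fun k => if h : k ∉ S then xb ⟨k, h⟩ else x k) y ^ (s / ρ)) ^ ρ := by
        refine Finset.sum_le_sum fun x _ => Finset.sum_le_sum fun y _ => ?_
        refine mul_le_mul_of_nonneg_left ?_ (mul_nonneg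
          (Finset.prod_nonneg fun k _ => Finset.prod_nonneg fun j _ => hP0 k _)
          (Real.rpow_nonneg (hWnK0 x y) _))
        have hjen := jensen_rpow
          (fun xt : ∀ k : {k : Fin K // k ∉ S}, Fin (L k.1) → Fin N → 𝓧 k.1 =>
            ∏ k : {k : Fin K // k ∉ S}, ∏ w, ∏ j, Q k.1 (xt k w j))
          (fun xt => ∑ wt : ∀ k : {k : Fin K // k ∉ S}, Fin (L k.1),
            WnK W (fun k => if h : k ∉ S then xt ⟨k, h⟩ (wt ⟨k, h⟩) else x k) y ^ (s / ρ))
          (fun xt => Finset.prod_nonneg fun k _ => Finset.prod_nonneg fun w _ =>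
            Finset.prod_nonneg fun j _ => hQ0 k.1 _)
          hQsum
          (fun xt => Finset.sum_nonneg fun wt _ => Real.rpow_nonneg (hWnK0 _ _) _)
          hρ0 hρ1
        refine hjen.trans (le_of_eq ?_)
        congr 1
        calc (∑ xt : ∀ k : {k : Fin K // k ∉ S}, Fin (L k.1) → Fin N → 𝓧 k.1,
              (∏ k : {k : Fin K // k ∉ S}, ∏ w, ∏ j, Q k.1 (xt k w j)) *
                ∑ wt : ∀ k : {k : Fin K // k ∉ S}, Fin (L k.1),
                  WnK W (fun k => if h : k ∉ S then xt ⟨k, h⟩ (wt ⟨k, h⟩) else x k) y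
                    ^ (s / ρ))
            = ∑ wt : ∀ k : {k : Fin K // k ∉ S}, Fin (L k.1),
              ∑ xt : ∀ k : {k : Fin K // k ∉ S}, Fin (L k.1) → Fin N → 𝓧 k.1,
                (∏ k : {k : Fin K // k ∉ S}, ∏ w, ∏ j, Q k.1 (xt k w j)) *
                  WnK W (fun k => if h : k ∉ S then xt ⟨k, h⟩ (wt ⟨k, h⟩) else x k) y
                    ^ (s / ρ) := by
              rw [Finset.sum_comm]
              exact Finset.sum_congr rfl fun xt _ => Finset.mul_sum _ _ _
          _ = ∑ wt : ∀ k : {k : Fin K // k ∉ S}, Fin (L k.1),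
                ∑ xb : ∀ k : {k : Fin K // k ∉ S}, Fin N → 𝓧 k.1,
                  (∏ k : {k : Fin K // k ∉ S}, ∏ j, Q k.1 (xb k j)) *
                    WnK W (fun k => if h : k ∉ S then xb ⟨k, h⟩ else x k) y ^ (s / ρ) :=
              Finset.sum_congr rfl fun wt _ => hmarg x y wt
          _ = (∏ k : {k : Fin K // k ∉ S}, (L k.1 : ℝ)) *
                ∑ xb : ∀ k : {k : Fin K // k ∉ S}, Fin N → 𝓧 k.1,
                  (∏ k : {k : Fin K // k ∉ S}, ∏ j, Q k.1 (xb k j)) *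
                    WnK W (fun k => if h : k ∉ S then xb ⟨k, h⟩ else x k) y ^ (s / ρ) := by
              rw [Finset.sum_const, Finset.card_univ, nsmul_eq_mul]
              congr 1
              rw [Fintype.card_pi]
              push_cast
              exact Finset.prod_congr rfl fun k _ => by rw [Fintype.card_fin]
    _ = (∏ k : {k : Fin K // k ∉ S}, (L k.1 : ℝ)) ^ ρ *
          (∑ y : 𝓨, ∑ xs : ∀ k : {k : Fin K // k ∈ S}, 𝓧 k.1,
              (∏ k, P k.1 (xs k)) *
                ((∑ xb : ∀ k : {k : Fin K // k ∉ S}, 𝓧 k.1,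
                    (∏ k, P k.1 (xb k)) * W (mergeS S xs xb) y ^ (1 - s)) *
                  (∑ xb : ∀ k : {k : Fin K // k ∉ S}, 𝓧 k.1,
                    (∏ k, Q k.1 (xb k)) * W (mergeS S xs xb) y ^ (s / ρ)) ^ ρ)) ^ N := by
        have hexp : ∀ (x : ∀ k, Fin N → 𝓧 k) (y : Fin N → 𝓨),
            ((∏ k, ∏ j, P k (x k j)) * WnK W x y ^ (1 - s)) *
              (((∏ k : {k : Fin K // k ∉ S}, (L k.1 : ℝ))) *
                ∑ xb : ∀ k : {k : Fin K // k ∉ S}, Fin N → 𝓧 k.1,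
                  (∏ k : {k : Fin K // k ∉ S}, ∏ j, Q k.1 (xb k j)) *
                    WnK W (fun k => if h : k ∉ S then xb ⟨k, h⟩ else x k) y ^ (s / ρ)) ^ ρ
            = (∏ k : {k : Fin K // k ∉ S}, (L k.1 : ℝ)) ^ ρ *
                ((∏ k, ∏ j, P k (x k j)) * WnK W x y ^ (1 - s) *
                  (∏ j, g2 W S Q (s / ρ) (fun k => x k j) (y j)) ^ ρ) := by
          intro x y
          rw [Real.mul_rpow hNc0 (hGN0 x y), GN_fact W hW0 S Q (s / ρ) x y]
          ring
        calc (∑ x : ∀ k, Fin N → 𝓧 k, ∑ y : Fin N → 𝓨,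
              ((∏ k, ∏ j, P k (x k j)) * WnK W x y ^ (1 - s)) *
                (((∏ k : {k : Fin K // k ∉ S}, (L k.1 : ℝ))) *
                  ∑ xb : ∀ k : {k : Fin K // k ∉ S}, Fin N → 𝓧 k.1,
                    (∏ k : {k : Fin K // k ∉ S}, ∏ j, Q k.1 (xb k j)) *
                      WnK W (fun k => if h : k ∉ S then xb ⟨k, h⟩ else x k) y ^ (s / ρ)) ^ ρ)
            = (∏ k : {k : Fin K // k ∉ S}, (L k.1 : ℝ)) ^ ρ *
              ∑ x : ∀ k, Fin N → 𝓧 k, ∑ y : Fin N → 𝓨,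
                (∏ k, ∏ j, P k (x k j)) * WnK W x y ^ (1 - s) *
                  (∏ j, g2 W S Q (s / ρ) (fun k => x k j) (y j)) ^ ρ := by
              rw [Finset.mul_sum]
              refine Finset.sum_congr rfl fun x _ => ?_
              rw [Finset.mul_sum]
              exact Finset.sum_congr rfl fun y _ => hexp x y
          _ = (∏ k : {k : Fin K // k ∉ S}, (L k.1 : ℝ)) ^ ρ *
              (∑ y : 𝓨, ∑ xs : ∀ k : {k : Fin K // k ∈ S}, 𝓧 k.1,
                (∏ k, P k.1 (xs k)) *
                  ((∑ xb : ∀ k : {k : Fin K // k ∉ S}, 𝓧 k.1,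
                      (∏ k, P k.1 (xb k)) * W (mergeS S xs xb) y ^ (1 - s)) *
                    (∑ xb : ∀ k : {k : Fin K // k ∉ S}, 𝓧 k.1,
                      (∏ k, Q k.1 (xb k)) * W (mergeS S xs xb) y ^ (s / ρ)) ^ ρ)) ^ N := by
              rw [single_letter W hW0 S P Q hQ0 (1 - s) (s / ρ) ρ,
                base_eq W S P Q (1 - s) (s / ρ) ρ]
end
end
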